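/- arXiv:2404.08321 — 6 statements merged into one kernel-verified Lean document; each statement's English description precedes it below -/
import Mathlib

section
/- Let X and Y be real Hilbert spaces, T : X → Y a bounded linear operator, W ⊆ X a finite-dimensional subspace with orthogonal projection Q : X → X onto W, T_m := T ∘ Q, and R : Y → Y the orthogonal projection onto the range of T_m (which is closed since it is finite-dimensional). Let y^δ ∈ Y, let i ≥ 1 be an integer, and let τ > 0 and δ > 0 satisfy τ δ² < ‖R y^δ‖². Then there exists a unique α > 0 such that α^{2i+1} ⟨(T_m T_m* + α I)^{−(2i+1)} (R y^δ), R y^δ⟩ = τ δ². -/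
/-! Since `T_m` has finite rank, `R yδ` lies in the finite-dimensional space `range T_m`, which is
invariant under the positive operator `A = T_m T_m*`. Expanding `R yδ = ∑ c_j e_j` in an
orthonormal eigenbasis of `A` on that space, with eigenvalues `μ_j > 0` because
`ker A = (range T_m)ᗮ`, the left-hand side of the equation becomes
`∑ c_j² (α / (μ_j + α))^(2i+1)`. This is continuous and strictly increasing in `α`, tends to `0`
at `0` and to `∑ c_j² = ‖R yδ‖²` at infinity, so it takes the value `τ δ²` exactly once. -/

open scoped RealInnerProductSpace
open Filter Topology Set

theorem existsUnique_pos_eq_of_strictMonoOn {f : ℝ → ℝ} {t L : ℝ}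
    (hcont : ContinuousOn f (Ici 0)) (hmono : StrictMonoOn f (Ioi 0))
    (hlim : Tendsto f atTop (𝓝 L)) (ht : t ∈ Ioo (f 0) L) :
    ∃! α, 0 < α ∧ f α = t := by
  obtain ⟨b, hb, hbt⟩ := ((hlim.eventually (eventually_gt_nhds ht.2)).and
    (eventually_gt_atTop 0)).exists.imp fun _ h ↦ h.symm
  obtain ⟨α, hα, hαt⟩ := intermediate_value_Ioo hb.le (hcont.mono Icc_subset_Ici_self)
    ⟨ht.1, hbt⟩
  exact ⟨α, ⟨hα.1, hαt⟩, fun β hβ ↦ hmono.injOn hβ.1 hα.1 (hβ.2.trans hαt.symm)⟩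

theorem strictMonoOn_div_add {μ : ℝ} (hμ : 0 < μ) :
    StrictMonoOn (fun α : ℝ ↦ α / (μ + α)) (Ici 0) := by
  intro a ha b hb hab
  simp only [mem_Ici] at ha hb
  rw [div_lt_div_iff₀ (by linarith) (by linarith)]
  nlinarith

theorem tendsto_div_add_atTop (μ : ℝ) :
    Tendsto (fun α : ℝ ↦ α / (μ + α)) atTop (𝓝 1) := by
  have h : Tendsto (fun α : ℝ ↦ 1 - μ * (μ + α)⁻¹) atTop (𝓝 (1 - μ * 0)) :=
    tendsto_const_nhds.sub <| tendsto_const_nhds.mul <|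
      tendsto_inv_atTop_zero.comp <| tendsto_atTop_add_const_left _ μ tendsto_id
  rw [mul_zero, sub_zero] at h
  refine h.congr' ?_
  filter_upwards [eventually_gt_atTop (-μ)] with α hα
  have : μ + α ≠ 0 := by linarith
  field_simp
  ring

theorem existsUnique_pos_sum_sq_mul_div_add_pow_eq {ι : Type*} [Fintype ι] {μ : ι → ℝ}
    (hμ : ∀ j, 0 < μ j) (c : ι → ℝ) {n : ℕ} (hn : n ≠ 0) {t : ℝ}
    (ht : t ∈ Ioo 0 (∑ j, c j ^ 2)) :
    ∃! α, 0 < α ∧ ∑ j, c j ^ 2 * (α / (μ j + α)) ^ n = t := by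
  obtain ⟨j₀, hj₀⟩ : ∃ j, c j ≠ 0 := by
    by_contra! h
    have hsum : ∑ j, c j ^ 2 = 0 := by simp [h]
    exact (ht.1.trans ht.2).ne' hsum
  refine existsUnique_pos_eq_of_strictMonoOn ?_ ?_ ?_ (L := ∑ j, c j ^ 2) (by simpa [hn] using ht)
  · refine continuousOn_finsetSum _ fun j _ ↦ ?_
    exact (continuousOn_id.div (by fun_prop) fun α (hα : 0 ≤ α) ↦ by
      linarith [hμ j]).pow n |>.const_smul (c j ^ 2)
  · intro a (ha : 0 < a) b (hb : 0 < b) hab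
    have hterm : ∀ j, (a / (μ j + a)) ^ n < (b / (μ j + b)) ^ n := fun j ↦
      pow_lt_pow_left₀ (strictMonoOn_div_add (hμ j) ha.le hb.le hab)
        (div_nonneg ha.le (by linarith [hμ j])) hn
    refine Finset.sum_lt_sum (fun j _ ↦ ?_) ⟨j₀, Finset.mem_univ _, ?_⟩
    · exact mul_le_mul_of_nonneg_left (hterm j).le (sq_nonneg _)
    · exact mul_lt_mul_of_pos_left (hterm j₀) (by positivity)
  · simpa using tendsto_finsetSum _ fun j _ ↦
      ((tendsto_div_add_atTop (μ j)).pow n).const_mul (c j ^ 2)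

section

variable {E : Type*} [NormedAddCommGroup E] [InnerProductSpace ℝ E]

theorem ContinuousLinearMap.IsPositive.isUnit_add_smul_one [CompleteSpace E] {A : E →L[ℝ] E}
    (hA : A.IsPositive) {α : ℝ} (hα : 0 < α) : IsUnit (A + α • 1) := by
  refine isUnit_of_forall_le_norm_inner_map _ (c := ⟨α, hα.le⟩) hα fun x ↦ ?_
  have h : ⟪(A + α • 1) x, x⟫ = ⟪A x, x⟫ + α * ‖x‖ ^ 2 := by
    simp [inner_add_left, real_inner_smul_left]
  rw [Real.norm_eq_abs, h]
  change ‖x‖ ^ 2 * α ≤ _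
  nlinarith [hA.inner_nonneg_left x, le_abs_self (⟪A x, x⟫ + α * ‖x‖ ^ 2)]

theorem Ring.inverse_pow_apply_of_apply_eq_smul {K M : Type*} [Field K] [TopologicalSpace M]
    [AddCommGroup M] [Module K M] {u : M →L[K] M} (hu : IsUnit u) {v : M} {c : K}
    (hv : u v = c • v) (n : ℕ) : (Ring.inverse u ^ n) v = c⁻¹ ^ n • v := by
  obtain ⟨u, rfl⟩ := hu
  have hw : c • (↑u⁻¹ : M →L[K] M) v = v := by
    rw [← map_smul, ← hv, ← mul_apply_eq_comp, u.inv_mul, one_apply_eq_self]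
  have hinv : (↑u⁻¹ : M →L[K] M) v = c⁻¹ • v := by
    rcases eq_or_ne c 0 with rfl | hc
    · rw [zero_smul] at hw
      simp [← hw]
    · exact (eq_inv_smul_iff₀ hc).mpr hw
  rw [Ring.inverse_unit]
  induction n with
  | zero => simp
  | succ n ih => rw [pow_succ, mul_apply_eq_comp, hinv, map_smul, ih, smul_smul, ← pow_succ']

theorem Orthonormal.inner_apply_sum_smul {ι : Type*} [Fintype ι] {e : ι → E}
    (he : Orthonormal ℝ e) {L : E →L[ℝ] E} {a : ι → ℝ} (hL : ∀ j, L (e j) = a j • e j)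
    (c : ι → ℝ) : ⟪L (∑ j, c j • e j), ∑ j, c j • e j⟫ = ∑ j, c j ^ 2 * a j := by
  simp only [map_sum, map_smul, hL, smul_smul]
  rw [he.inner_sum]
  exact Finset.sum_congr rfl fun j _ ↦ by simp; ring

end

namespace ContinuousLinearMap

variable {X Y : Type*} [NormedAddCommGroup X] [InnerProductSpace ℝ X] [CompleteSpace X]
  [NormedAddCommGroup Y] [InnerProductSpace ℝ Y] [CompleteSpace Y]

theorem inner_comp_adjoint_apply_self_pos (S : X →L[ℝ] Y) {y : Y}
    (hy : y ∈ LinearMap.range (S : X →ₗ[ℝ] Y)) (hy₀ : y ≠ 0) : 0 < ⟪(S ∘L adjoint S) y, y⟫ := by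
  refine (isPositive_self_comp_adjoint S).inner_nonneg_left y |>.lt_of_ne' fun h ↦ hy₀ ?_
  obtain ⟨x, rfl⟩ := hy
  have hS : adjoint S (S x) = 0 := by
    rwa [comp_apply, ← adjoint_inner_right, real_inner_self_eq_norm_sq, sq_eq_zero_iff,
      norm_eq_zero] at h
  rw [← inner_self_eq_zero (𝕜 := ℝ)]
  simpa [hS] using (adjoint_inner_right S x (S x)).symm

theorem exists_orthonormal_eigenvectors_comp_adjoint (S : X →L[ℝ] Y)
    [FiniteDimensional ℝ (LinearMap.range (S : X →ₗ[ℝ] Y))] {y : Y}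
    (hy : y ∈ LinearMap.range (S : X →ₗ[ℝ] Y)) :
    ∃ (d : ℕ) (e : Fin d → Y) (μ c : Fin d → ℝ), Orthonormal ℝ e ∧
      (∀ j, (S ∘L adjoint S) (e j) = μ j • e j) ∧ (∀ j, 0 < μ j) ∧ y = ∑ j, c j • e j := by
  set V := LinearMap.range (S : X →ₗ[ℝ] Y)
  have hAV : ∀ v ∈ V, (S ∘L adjoint S) v ∈ V := fun v _ ↦ ⟨adjoint S v, rfl⟩
  have hsym : (((S ∘L adjoint S) : Y →ₗ[ℝ] Y).restrict hAV).IsSymmetric :=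
    (isPositive_self_comp_adjoint S).isSymmetric.restrict_invariant hAV
  set b := hsym.eigenvectorBasis rfl
  have heig : ∀ j, (S ∘L adjoint S) (b j) = hsym.eigenvalues rfl j • (b j : Y) := fun j ↦
    congrArg Subtype.val (hsym.apply_eigenvectorBasis rfl j)
  refine ⟨_, fun j ↦ b j, hsym.eigenvalues rfl, b.repr ⟨y, hy⟩,
    b.orthonormal.comp_linearIsometry V.subtypeₗᵢ, heig, fun j ↦ ?_, ?_⟩
  · have hnorm : ‖(b j : Y)‖ = 1 := b.orthonormal.1 j
    have := inner_comp_adjoint_apply_self_pos S (b j).2 (norm_ne_zero_iff.mp (by simp [hnorm]))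
    rwa [heig, real_inner_smul_left, real_inner_self_eq_norm_sq, hnorm, one_pow, mul_one] at this
  · simpa using congrArg Subtype.val (b.sum_repr ⟨y, hy⟩).symm

end ContinuousLinearMap

theorem parameter_rule_exists_unique_general
    {X Y : Type*} [NormedAddCommGroup X] [InnerProductSpace ℝ X] [CompleteSpace X]
    [NormedAddCommGroup Y] [InnerProductSpace ℝ Y] [CompleteSpace Y]
    (T : X →L[ℝ] Y) (W : Submodule ℝ X) [FiniteDimensional ℝ W]
    -- `Q` is the orthogonal projection of `X` onto `W`
    (Q : X →L[ℝ] X)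
    (hQrange : LinearMap.range (Q : X →ₗ[ℝ] X) = W)
    -- `R` is the orthogonal projection of `Y` onto the range of `T_m := T ∘ Q`
    (R : Y →L[ℝ] Y)
    (hRrange : LinearMap.range (R : Y →ₗ[ℝ] Y) = LinearMap.range ((T ∘L Q : X →L[ℝ] Y) : X →ₗ[ℝ] Y))
    (yδ : Y) (i : ℕ)
    (τ δ : ℝ) (hτ : 0 < τ) (hδ : 0 < δ)
    (hcond : τ * δ ^ 2 < ‖R yδ‖ ^ 2) :
    ∃! α : ℝ, 0 < α ∧
      α ^ (2 * i + 1) *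
        ⟪((Ring.inverse
              ((T ∘L Q) ∘L ContinuousLinearMap.adjoint (T ∘L Q) + α • (1 : Y →L[ℝ] Y)))
            ^ (2 * i + 1)) (R yδ), R yδ⟫ = τ * δ ^ 2 := by
  have : FiniteDimensional ℝ (LinearMap.range ((T ∘L Q : X →L[ℝ] Y) : X →ₗ[ℝ] Y)) := by
    rw [ContinuousLinearMap.toLinearMap_comp, LinearMap.range_comp, hQrange]
    infer_instance
  obtain ⟨d, e, μ, c, he, heig, hμ, hy⟩ :=
    (T ∘L Q).exists_orthonormal_eigenvectors_comp_adjoint (y := R yδ)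
      (hRrange ▸ LinearMap.mem_range_self (R : Y →ₗ[ℝ] Y) yδ)
  have hnorm : ‖R yδ‖ ^ 2 = ∑ j, c j ^ 2 := by
    simpa [hy, real_inner_self_eq_norm_sq] using
      he.inner_apply_sum_smul (L := 1) (a := 1) (by simp) c
  refine (existsUnique_congr fun α ↦ and_congr_right fun hα ↦ ?_).mpr
    (existsUnique_pos_sum_sq_mul_div_add_pow_eq hμ c (2 * i).add_one_ne_zero
      ⟨by positivity, hnorm ▸ hcond⟩)
  have hu := (ContinuousLinearMap.isPositive_self_comp_adjoint (T ∘L Q)).isUnit_add_smul_one hα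
  rw [hy, he.inner_apply_sum_smul fun j ↦ Ring.inverse_pow_apply_of_apply_eq_smul hu
    (c := μ j + α) (by rw [add_apply, heig j, smul_apply, one_apply_eq_self, add_smul]) _,
    Finset.mul_sum]
  refine Eq.congr_left (Finset.sum_congr rfl fun j _ ↦ ?_)
  rw [div_pow, div_eq_mul_inv, inv_pow]
  ring

/-- Existence and uniqueness of the solution of the parameter selection equation (4)
under condition (5): `τ δ² < ‖R yδ‖²`. -/
theorem parameter_rule_exists_unique
    {X Y : Type*} [NormedAddCommGroup X] [InnerProductSpace ℝ X] [CompleteSpace X]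
    [NormedAddCommGroup Y] [InnerProductSpace ℝ Y] [CompleteSpace Y]
    (T : X →L[ℝ] Y) (W : Submodule ℝ X) [FiniteDimensional ℝ W]
    -- `Q` is the orthogonal projection of `X` onto `W`
    (Q : X →L[ℝ] X)
    (hQidem : Q ∘L Q = Q)
    (hQsym : ∀ u v : X, ⟪Q u, v⟫ = ⟪u, Q v⟫)
    (hQrange : LinearMap.range (Q : X →ₗ[ℝ] X) = W)
    -- `R` is the orthogonal projection of `Y` onto the range of `T_m := T ∘ Q`
    (R : Y →L[ℝ] Y)
    (hRidem : R ∘L R = R)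
    (hRsym : ∀ u v : Y, ⟪R u, v⟫ = ⟪u, R v⟫)
    (hRrange : LinearMap.range (R : Y →ₗ[ℝ] Y) = LinearMap.range ((T ∘L Q : X →L[ℝ] Y) : X →ₗ[ℝ] Y))
    (yδ : Y) (i : ℕ) (hi : 1 ≤ i)
    (τ δ : ℝ) (hτ : 0 < τ) (hδ : 0 < δ)
    (hcond : τ * δ ^ 2 < ‖R yδ‖ ^ 2) :
    ∃! α : ℝ, 0 < α ∧
      α ^ (2 * i + 1) *
        ⟪((Ring.inverse
              ((T ∘L Q) ∘L ContinuousLinearMap.adjoint (T ∘L Q) + α • (1 : Y →L[ℝ] Y)))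
            ^ (2 * i + 1)) (R yδ), R yδ⟫ = τ * δ ^ 2 :=
  parameter_rule_exists_unique_general T W Q hQrange R hRrange yδ i τ δ hτ hδ hcond
end

section
/- Let n, ℓ be positive integers with ℓ < n, let T ∈ ℝ^{n×n}, and let y, y^δ ∈ ℝ^n with y^δ ≠ 0 and ‖y − y^δ‖₂ ≤ δ. Let V_{ℓ+1} ∈ ℝ^{n×(ℓ+1)} have orthonormal columns with first column y^δ/‖y^δ‖₂, let H ∈ ℝ^{(ℓ+1)×ℓ} satisfy T V_ℓ = V_{ℓ+1} H where V_ℓ consists of the first ℓ columns of V_{ℓ+1}, and set T^{(ℓ)} := V_{ℓ+1} H V_ℓᵀ. Let R_ℓ ∈ ℝ^{n×n} be the orthogonal projection onto the column space of T^{(ℓ)}. Let x† ∈ ℝ^n satisfy T x† = y and assume R_ℓ (T x†) = T^{(ℓ)} x†. Fix an integer i ≥ 1 and for β > 0 set x_{β,i}^{δ,ℓ} := Σ_{k=1}^i β^{k−1} (T^{(ℓ)ᵀ} T^{(ℓ)} + β I_n)^{−k} T^{(ℓ)ᵀ} y^δ. If δ² < ‖R_ℓ y^δ‖₂² and α > 0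 satisfies α^{2i+1} (R_ℓ y^δ)ᵀ (T^{(ℓ)} T^{(ℓ)ᵀ} + α I_n)^{−(2i+1)} (R_ℓ y^δ) = δ², then for every α̃ ≥ α one has ‖x† − x_{α,i}^{δ,ℓ}‖₂ ≤ ‖x† − x_{α̃,i}^{δ,ℓ}‖₂. -/
/-!
Write `M = Tlᵀ Tl` and pick `w` with `Tl w = R yδ` (possible since `R` and `Tl` have the same
range). Then `Tlᵀ yδ = M w`, the iterates telescope to `x_β = (1 - (β (M + β)⁻¹)^i) w`, and
`ξ = w - x†` satisfies `Tl ξ = R (yδ - y)`, so `ξᵀ M ξ ≤ δ²`. In an eigenbasis of `M`, with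
eigenvalues `λⱼ` and `sⱼ(β) = β / (λⱼ + β)`, the squared error is
`F(β) = ∑ (sⱼ^i ŵⱼ - ξ̂ⱼ)²` and the rule reads `Φ(α) = δ²` for the increasing function
`Φ(β) = ∑ λⱼ sⱼ^(2i+1) ŵⱼ²`. Since `sⱼ' = λⱼ sⱼ² / β²`,
`F'(β) = (2i / β²) (Φ(β) - ∑ λⱼ sⱼ^(i+1) ŵⱼ ξ̂ⱼ)`, and by Cauchy–Schwarz and `sⱼ ≤ 1` the sum is
at most `√(Φ(β) ∑ λⱼ ξ̂ⱼ²) ≤ √(Φ(β) Φ(α)) ≤ Φ(β)` for `β ≥ α`; hence `F` increases on `[α, ∞)`.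
-/

open Matrix

/-- The Euclidean norm on `ℝ^n`. -/
noncomputable def euclNorm {n : ℕ} (x : Fin n → ℝ) : ℝ := Real.sqrt (∑ r, x r ^ 2)

open Finset

section ResidualFactor

variable {l β : ℝ}

theorem div_add_self_le_div_add_self (hl : 0 ≤ l) (hβ : 0 < β) {β' : ℝ} (h : β ≤ β') :
    β / (l + β) ≤ β' / (l + β') := by
  rw [div_le_div_iff₀ (by positivity) (by linarith)]
  nlinarith

theorem hasDerivAt_div_add_self (h : l + β ≠ 0) :
    HasDerivAt (fun b => b / (l + b)) (l / (l + β) ^ 2) β := by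
  refine ((hasDerivAt_id' β).fun_div ((hasDerivAt_id' β).const_add l) h).congr_deriv ?_
  ring

theorem hasDerivAt_div_add_self_pow_mul_sub_sq (hl : 0 ≤ l) (hβ : 0 < β) (i : ℕ) (w ξ : ℝ) :
    HasDerivAt (fun b => ((b / (l + b)) ^ i * w - ξ) ^ 2)
      (2 * i / β ^ 2 * (l * (β / (l + β)) ^ (i + 1) * w * ((β / (l + β)) ^ i * w - ξ))) β := by
  have hne : l + β ≠ 0 := by positivity
  have hderiv : l / (l + β) ^ 2 = l * (β / (l + β)) ^ 2 / β ^ 2 := by field_simp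
  refine ((((hasDerivAt_div_add_self hne).fun_pow i).mul_const w).sub_const ξ).fun_pow 2
    |>.congr_deriv ?_
  rcases i with _ | i
  · simp
  · rw [hderiv]
    simp only [Nat.add_sub_cancel, Nat.cast_add, Nat.cast_one]
    ring

end ResidualFactor

section Spectral

variable {ι : Type*} [Fintype ι] (l w ξ : ι → ℝ) (i : ℕ)

/-- The squared error `‖x† - x_β‖²` of the iterated method in an eigenbasis of `M`. -/
noncomputable def spectralError (β : ℝ) : ℝ := ∑ j, ((β / (l j + β)) ^ i * w j - ξ j) ^ 2

/-- The left-hand side of the parameter choice rule (R1), in an eigenbasis of `M`. -/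
noncomputable def spectralRule (β : ℝ) : ℝ := ∑ j, l j * (β / (l j + β)) ^ (2 * i + 1) * w j ^ 2

variable {l w ξ}

theorem monotoneOn_spectralRule (hl : ∀ j, 0 ≤ l j) :
    MonotoneOn (spectralRule l w i) (Set.Ioi 0) := by
  intro β hβ β' _ h
  refine sum_le_sum fun j _ => ?_
  have hs0 : 0 ≤ β / (l j + β) := div_nonneg hβ.le (by linarith [hl j, Set.mem_Ioi.mp hβ])
  exact mul_le_mul_of_nonneg_right (mul_le_mul_of_nonneg_left
    (pow_le_pow_left₀ hs0 (div_add_self_le_div_add_self (hl j) hβ h) _) (hl j)) (sq_nonneg _)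

theorem sum_mul_le_spectralRule (hl : ∀ j, 0 ≤ l j) {β : ℝ} (hβ : 0 < β)
    (h : ∑ j, l j * ξ j ^ 2 ≤ spectralRule l w i β) :
    ∑ j, l j * (β / (l j + β)) ^ (i + 1) * w j * ξ j ≤ spectralRule l w i β := by
  set Φ := spectralRule l w i β
  have hs : ∀ j, 0 ≤ β / (l j + β) ∧ β / (l j + β) ≤ 1 := fun j =>
    ⟨by have := hl j; positivity, div_le_one_of_le₀ (by linarith [hl j]) (by linarith [hl j])⟩
  have hΦ : 0 ≤ Φ := sum_nonneg fun j _ => by have := hl j; have := (hs j).1; positivity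
  have hsq : ∑ j, l j * ((β / (l j + β)) ^ (i + 1)) ^ 2 * w j ^ 2 ≤ Φ := by
    refine sum_le_sum fun j _ => mul_le_mul_of_nonneg_right
      (mul_le_mul_of_nonneg_left ?_ (hl j)) (sq_nonneg _)
    rw [← pow_mul]
    exact pow_le_pow_of_le_one (hs j).1 (hs j).2 (by omega)
  have hCS := sum_sq_le_sum_mul_sum_of_sq_le_mul univ
    (r := fun j => l j * (β / (l j + β)) ^ (i + 1) * w j * ξ j)
    (f := fun j => l j * ((β / (l j + β)) ^ (i + 1)) ^ 2 * w j ^ 2) (g := fun j => l j * ξ j ^ 2)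
    (fun j _ => by have := hl j; positivity) (fun j _ => by have := hl j; positivity)
    (fun j _ => le_of_eq (by ring))
  refine le_of_abs_le (abs_le_of_sq_le_sq ?_ hΦ)
  calc _ ≤ _ := hCS
    _ ≤ Φ * Φ := mul_le_mul hsq h (sum_nonneg fun j _ => by have := hl j; positivity) hΦ
    _ = Φ ^ 2 := (sq Φ).symm

theorem hasDerivAt_spectralError (hl : ∀ j, 0 ≤ l j) {β : ℝ} (hβ : 0 < β) :
    HasDerivAt (spectralError l w ξ i) (2 * i / β ^ 2 * (spectralRule l w i β -
      ∑ j, l j * (β / (l j + β)) ^ (i + 1) * w j * ξ j)) β := by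
  refine (HasDerivAt.fun_sum fun j _ =>
    hasDerivAt_div_add_self_pow_mul_sub_sq (hl j) hβ i (w j) (ξ j)).congr_deriv ?_
  rw [spectralRule, ← sum_sub_distrib, mul_sum]
  exact sum_congr rfl fun j _ => by ring

theorem monotoneOn_spectralError (hl : ∀ j, 0 ≤ l j) {α : ℝ} (hα : 0 < α)
    (h : ∑ j, l j * ξ j ^ 2 ≤ spectralRule l w i α) :
    MonotoneOn (spectralError l w ξ i) (Set.Ici α) := by
  refine monotoneOn_of_hasDerivWithinAt_nonneg (convex_Ici α) (f' := fun β => 2 * i / β ^ 2 *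
      (spectralRule l w i β - ∑ j, l j * (β / (l j + β)) ^ (i + 1) * w j * ξ j))
    (fun β hβ => (hasDerivAt_spectralError i hl (hα.trans_le hβ)).continuousAt.continuousWithinAt)
    (fun β hβ => ?_) (fun β hβ => ?_) <;> rw [interior_Ici] at hβ
  · exact (hasDerivAt_spectralError i hl (hα.trans hβ)).hasDerivWithinAt
  · have hβ0 : 0 < β := hα.trans hβ
    have hrule := h.trans (monotoneOn_spectralRule i hl hα hβ0 hβ.le)
    exact mul_nonneg (by positivity) (sub_nonneg.mpr (sum_mul_le_spectralRule i hl hβ0 hrule))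

end Spectral

section TransposeMulSelf

variable {ι m : Type*} [Fintype ι] [Fintype m] (A : Matrix m ι ℝ)

theorem dotProduct_transpose_mul_self_mulVec (v : ι → ℝ) :
    v ⬝ᵥ ((Aᵀ * A) *ᵥ v) = (A *ᵥ v) ⬝ᵥ (A *ᵥ v) := by
  rw [← mulVec_mulVec, dotProduct_mulVec, vecMul_transpose]

theorem Matrix.posSemidef_transpose_mul_self : (Aᵀ * A).PosSemidef := by
  simpa only [conjTranspose_eq_transpose_of_trivial] using posSemidef_conjTranspose_mul_self A

end TransposeMulSelf

section OrthogonalConj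

variable {ι : Type*} [Fintype ι] [DecidableEq ι] {U : Matrix ι ι ℝ}

theorem conj_diagonal_mul_conj_diagonal (hU : Uᵀ * U = 1) (d e : ι → ℝ) :
    U * diagonal d * Uᵀ * (U * diagonal e * Uᵀ) = U * diagonal (d * e) * Uᵀ := by
  simp only [Matrix.mul_assoc]
  rw [← Matrix.mul_assoc Uᵀ, hU, Matrix.one_mul, ← Matrix.mul_assoc (diagonal d),
    diagonal_mul_diagonal']
  rfl

theorem conj_diagonal_pow (hU : Uᵀ * U = 1) (d : ι → ℝ) (k : ℕ) :
    (U * diagonal d * Uᵀ) ^ k = U * diagonal (d ^ k) * Uᵀ := by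
  induction k with
  | zero => simp [mul_eq_one_comm.mp hU]
  | succ k ih => rw [pow_succ, ih, conj_diagonal_mul_conj_diagonal hU, pow_succ]

theorem conj_diagonal_inv (hU : Uᵀ * U = 1) {d : ι → ℝ} (hd : ∀ j, d j ≠ 0) :
    (U * diagonal d * Uᵀ)⁻¹ = U * diagonal d⁻¹ * Uᵀ := by
  refine inv_eq_right_inv ?_
  have hdd : d * d⁻¹ = 1 := funext fun j => mul_inv_cancel₀ (hd j)
  simp [conj_diagonal_mul_conj_diagonal hU, hdd, mul_eq_one_comm.mp hU]

theorem smul_conj_diagonal (c : ℝ) (d : ι → ℝ) :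
    c • (U * diagonal d * Uᵀ) = U * diagonal (c • d) * Uᵀ := by
  rw [diagonal_smul, Matrix.mul_smul, Matrix.smul_mul]

theorem conj_diagonal_add_smul_one (hU : Uᵀ * U = 1) (d : ι → ℝ) (c : ℝ) :
    U * diagonal d * Uᵀ + c • 1 = U * diagonal (fun j => d j + c) * Uᵀ := by
  have hc : (c • 1 : Matrix ι ι ℝ) = U * diagonal (fun _ => c) * Uᵀ := by
    rw [← smul_one_eq_diagonal, Matrix.mul_smul, Matrix.mul_one, Matrix.smul_mul,
      mul_eq_one_comm.mp hU]
  rw [hc, ← Matrix.add_mul, ← Matrix.mul_add, diagonal_add]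

theorem transpose_mulVec_conj_diagonal_mulVec (hU : Uᵀ * U = 1) (d v : ι → ℝ) :
    Uᵀ *ᵥ ((U * diagonal d * Uᵀ) *ᵥ v) = d * (Uᵀ *ᵥ v) := by
  rw [mulVec_mulVec, ← Matrix.mul_assoc, ← Matrix.mul_assoc, hU, Matrix.one_mul,
    ← mulVec_mulVec]
  ext j
  exact mulVec_diagonal _ _ j

theorem dotProduct_conj_diagonal_mulVec (d v : ι → ℝ) :
    v ⬝ᵥ ((U * diagonal d * Uᵀ) *ᵥ v) = ∑ j, d j * (Uᵀ *ᵥ v) j ^ 2 := by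
  rw [← mulVec_mulVec, ← mulVec_mulVec, dotProduct_mulVec, ← mulVec_transpose]
  simp only [dotProduct, mulVec_diagonal]
  exact sum_congr rfl fun j _ => by ring

theorem dotProduct_transpose_mulVec_self (hU : Uᵀ * U = 1) (v : ι → ℝ) :
    (Uᵀ *ᵥ v) ⬝ᵥ (Uᵀ *ᵥ v) = v ⬝ᵥ v := by
  rw [dotProduct_mulVec, vecMul_transpose, mulVec_mulVec, mul_eq_one_comm.mp hU, one_mulVec]

end OrthogonalConj

section Tikhonov

variable {ι : Type*} [Fintype ι] [DecidableEq ι]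

theorem Matrix.PosSemidef.exists_conj_diagonal {M : Matrix ι ι ℝ} (hM : M.PosSemidef) :
    ∃ (U : Matrix ι ι ℝ) (l : ι → ℝ), Uᵀ * U = 1 ∧ (∀ j, 0 ≤ l j) ∧ M = U * diagonal l * Uᵀ := by
  set hH := hM.isHermitian
  refine ⟨hH.eigenvectorUnitary, hH.eigenvalues, ?_, hM.eigenvalues_nonneg, ?_⟩
  · simpa [star_eq_conjTranspose] using (mem_unitaryGroup_iff').mp hH.eigenvectorUnitary.2
  · simpa [Unitary.conjStarAlgAut_apply, star_eq_conjTranspose] using hH.spectral_theorem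

theorem Matrix.PosSemidef.isUnit_det_add_smul_one {M : Matrix ι ι ℝ} (hM : M.PosSemidef)
    {β : ℝ} (hβ : 0 < β) : IsUnit (M + β • 1).det :=
  (isUnit_iff_isUnit_det _).mp (PosDef.posSemidef_add hM (PosDef.one.smul hβ)).isUnit

/-- `β (M + β)⁻¹ = 1 - M (M + β)⁻¹`, the residual operator of Tikhonov regularization. -/
noncomputable def tikhonovResidual (M : Matrix ι ι ℝ) (β : ℝ) : Matrix ι ι ℝ := β • (M + β • 1)⁻¹

theorem tikhonovResidual_conj_diagonal {U : Matrix ι ι ℝ} (hU : Uᵀ * U = 1) {l : ι → ℝ}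
    (hl : ∀ j, 0 ≤ l j) {β : ℝ} (hβ : 0 < β) :
    tikhonovResidual (U * diagonal l * Uᵀ) β = U * diagonal (fun j => β / (l j + β)) * Uᵀ := by
  rw [tikhonovResidual, conj_diagonal_add_smul_one hU,
    conj_diagonal_inv hU fun j => by have := hl j; positivity, smul_conj_diagonal]
  rfl

theorem sum_smul_pow_mul_eq_one_sub {K R : Type*} [CommRing K] [Ring R] [Algebra K R] {B M : R}
    {β : K} (hB : B * (M + β • 1) = 1) (i : ℕ) :
    ∑ k ∈ Icc 1 i, β ^ (k - 1) • (B ^ k * M) = 1 - (β • B) ^ i := by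
  have hBM : B * M = 1 - β • B := by
    rw [← hB, mul_add, mul_smul_comm, mul_one, add_sub_cancel_right]
  induction i with
  | zero => simp
  | succ i ih =>
    have hstep : B ^ (i + 1) * M = B ^ i - β • B ^ (i + 1) := by
      rw [pow_succ, mul_assoc, hBM, mul_sub, mul_one, mul_smul_comm]
    rw [sum_Icc_succ_top (by omega), ih, Nat.add_sub_cancel, hstep, smul_sub, smul_smul,
      ← pow_succ, smul_pow, smul_pow]
    abel

theorem iteratedTikhonov_eq {M : Matrix ι ι ℝ} (hM : M.PosSemidef) {β : ℝ} (hβ : 0 < β)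
    (i : ℕ) (w : ι → ℝ) :
    ∑ k ∈ Icc 1 i, β ^ (k - 1) • ((M + β • 1)⁻¹ ^ k *ᵥ (M *ᵥ w)) =
      (1 - tikhonovResidual M β ^ i) *ᵥ w := by
  rw [tikhonovResidual, ← sum_smul_pow_mul_eq_one_sub
    (nonsing_inv_mul _ (hM.isUnit_det_add_smul_one hβ)), sum_mulVec]
  exact sum_congr rfl fun k _ => by rw [smul_mulVec, mulVec_mulVec]

theorem transpose_mul_inv_add_smul_one_pow (A : Matrix ι ι ℝ) {α : ℝ} (hα : 0 < α) (k : ℕ) :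
    Aᵀ * (A * Aᵀ + α • 1)⁻¹ ^ k = (Aᵀ * A + α • 1)⁻¹ ^ k * Aᵀ := by
  have h : SemiconjBy Aᵀ (A * Aᵀ + α • 1) (Aᵀ * A + α • 1) := by
    simp only [SemiconjBy, Matrix.mul_add, Matrix.add_mul, Matrix.mul_assoc, Matrix.mul_smul,
      Matrix.smul_mul, Matrix.mul_one, Matrix.one_mul]
  have := (Matrix.SemiconjBy.zpow_right
    (by simpa using (posSemidef_transpose_mul_self Aᵀ).isUnit_det_add_smul_one hα)
    ((posSemidef_transpose_mul_self A).isUnit_det_add_smul_one hα) h (-1)).pow_right k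
  rwa [Matrix.zpow_neg_one, Matrix.zpow_neg_one] at this

theorem iteratedTikhonov_error_eq_spectralError {U : Matrix ι ι ℝ} (hU : Uᵀ * U = 1) {l : ι → ℝ}
    (hl : ∀ j, 0 ≤ l j) {β : ℝ} (hβ : 0 < β) (i : ℕ) (w x : ι → ℝ) :
    (x - (1 - tikhonovResidual (U * diagonal l * Uᵀ) β ^ i) *ᵥ w) ⬝ᵥ
      (x - (1 - tikhonovResidual (U * diagonal l * Uᵀ) β ^ i) *ᵥ w) =
      spectralError l (Uᵀ *ᵥ w) (Uᵀ *ᵥ (w - x)) i β := by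
  have he : x - (1 - tikhonovResidual (U * diagonal l * Uᵀ) β ^ i) *ᵥ w =
      tikhonovResidual (U * diagonal l * Uᵀ) β ^ i *ᵥ w - (w - x) := by
    rw [sub_mulVec, one_mulVec]
    abel
  rw [← dotProduct_transpose_mulVec_self hU, he, mulVec_sub,
    tikhonovResidual_conj_diagonal hU hl hβ, conj_diagonal_pow hU,
    transpose_mulVec_conj_diagonal_mulVec hU]
  simp only [spectralError, dotProduct, sq, Pi.sub_apply, Pi.mul_apply, Pi.pow_apply]

theorem monotoneOn_iteratedTikhonov_error {M : Matrix ι ι ℝ} (hM : M.PosSemidef) (i : ℕ)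
    {α : ℝ} (hα : 0 < α) (w x : ι → ℝ)
    (h : (w - x) ⬝ᵥ (M *ᵥ (w - x)) ≤
      w ⬝ᵥ ((tikhonovResidual M α ^ (2 * i + 1) * M) *ᵥ w)) :
    MonotoneOn (fun β => (x - (1 - tikhonovResidual M β ^ i) *ᵥ w) ⬝ᵥ
      (x - (1 - tikhonovResidual M β ^ i) *ᵥ w)) (Set.Ici α) := by
  obtain ⟨U, l, hU, hl, rfl⟩ := hM.exists_conj_diagonal
  rw [tikhonovResidual_conj_diagonal hU hl hα, conj_diagonal_pow hU,
    conj_diagonal_mul_conj_diagonal hU, dotProduct_conj_diagonal_mulVec,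
    dotProduct_conj_diagonal_mulVec] at h
  refine (monotoneOn_spectralError i hl hα (h.trans_eq ?_)).congr fun β hβ =>
    (iteratedTikhonov_error_eq_spectralError hU hl (hα.trans_le hβ) i w x).symm
  exact sum_congr rfl fun j _ => by simp only [Pi.mul_apply, Pi.pow_apply]; ring

theorem pow_mul_dotProduct_inv_add_smul_one_pow_mulVec (A : Matrix ι ι ℝ) {α : ℝ} (hα : 0 < α)
    (k : ℕ) (w : ι → ℝ) :
    α ^ k * ((A *ᵥ w) ⬝ᵥ ((A * Aᵀ + α • 1)⁻¹ ^ k *ᵥ (A *ᵥ w))) =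
      w ⬝ᵥ ((tikhonovResidual (Aᵀ * A) α ^ k * (Aᵀ * A)) *ᵥ w) := by
  rw [tikhonovResidual, smul_pow, Matrix.smul_mul, smul_mulVec, dotProduct_smul, smul_eq_mul,
    ← Matrix.mul_assoc, ← transpose_mul_inv_add_smul_one_pow A hα, ← mulVec_mulVec,
    ← mulVec_mulVec, dotProduct_mulVec w Aᵀ, vecMul_transpose]

end Tikhonov

section Projection

variable {ι : Type*} [Fintype ι] {R : Matrix ι ι ℝ}

theorem dotProduct_mulVec_self_le_of_idempotent (hRsym : Rᵀ = R) (hRidem : R * R = R)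
    (u : ι → ℝ) : (R *ᵥ u) ⬝ᵥ (R *ᵥ u) ≤ u ⬝ᵥ u := by
  have hRR : (R *ᵥ u) ⬝ᵥ (R *ᵥ u) = (R *ᵥ u) ⬝ᵥ u := by
    rw [dotProduct_mulVec, ← mulVec_transpose, hRsym, mulVec_mulVec, hRidem]
  have h := dotProduct_self_star_nonneg (u - R *ᵥ u)
  simp only [star_trivial, sub_dotProduct, dotProduct_sub, dotProduct_comm u (R *ᵥ u)] at h
  linarith

theorem mul_eq_of_range_le [DecidableEq ι] (hRidem : R * R = R) {A : Matrix ι ι ℝ}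
    (hrange : ∀ x, ∃ y, R *ᵥ y = A *ᵥ x) : R * A = A := by
  refine ext_of_mulVec_single fun j => ?_
  obtain ⟨y, hy⟩ := hrange (Pi.single j 1)
  rw [← mulVec_mulVec, ← hy, mulVec_mulVec, hRidem]

theorem transpose_mul_eq_of_range_le [DecidableEq ι] (hRsym : Rᵀ = R) (hRidem : R * R = R)
    {A : Matrix ι ι ℝ} (hrange : ∀ x, ∃ y, R *ᵥ y = A *ᵥ x) : Aᵀ * R = Aᵀ := by
  simpa only [transpose_mul, hRsym] using congrArg transpose (mul_eq_of_range_le hRidem hrange)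

end Projection

theorem euclNorm_eq_sqrt_dotProduct {n : ℕ} (x : Fin n → ℝ) : euclNorm x = √(x ⬝ᵥ x) := by
  simp only [euclNorm, dotProduct, sq]

theorem iAT_error_monotone_general
    {n : ℕ}
    (T : Matrix (Fin n) (Fin n) ℝ) (y yδ : Fin n → ℝ) (δ : ℝ)
    (hnoise : euclNorm (y - yδ) ≤ δ)
    -- the Arnoldi approximation `T⁽ℓ⁾`
    (Tl : Matrix (Fin n) (Fin n) ℝ)
    -- `R` is the orthogonal projection onto the column space of `T⁽ℓ⁾`
    (R : Matrix (Fin n) (Fin n) ℝ)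
    (hRsym : Rᵀ = R) (hRidem : R * R = R)
    (hRrange : ∀ v : Fin n → ℝ, (∃ x, R.mulVec x = v) ↔ ∃ x, Tl.mulVec x = v)
    -- exact solution and compatibility assumption (Assumption 4.1)
    (xtrue : Fin n → ℝ) (hsol : T.mulVec xtrue = y)
    (hcompat : R.mulVec (T.mulVec xtrue) = Tl.mulVec xtrue)
    (i : ℕ)
    -- the iterated Arnoldi–Tikhonov approximations
    (xiter : ℝ → Fin n → ℝ)
    (hxiter : ∀ β : ℝ, 0 < β → xiter β =
      ∑ k ∈ Finset.Icc 1 i, β ^ (k - 1) •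
        ((Tlᵀ * Tl + β • (1 : Matrix (Fin n) (Fin n) ℝ))⁻¹ ^ k).mulVec (Tlᵀ.mulVec yδ))
    -- the parameter choice rule (R1)
    (α : ℝ) (hα : 0 < α)
    (hrule : α ^ (2 * i + 1) *
      (R.mulVec yδ) ⬝ᵥ
        (((Tl * Tlᵀ + α • (1 : Matrix (Fin n) (Fin n) ℝ))⁻¹ ^ (2 * i + 1)).mulVec
          (R.mulVec yδ)) = δ ^ 2) :
    ∀ α' : ℝ, α ≤ α' →
      euclNorm (xtrue - xiter α) ≤ euclNorm (xtrue - xiter α') := by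
  intro α' hαα'
  obtain ⟨w, hw⟩ : ∃ w, Tl *ᵥ w = R *ᵥ yδ := (hRrange _).mp ⟨yδ, rfl⟩
  have hM := posSemidef_transpose_mul_self Tl
  have hdata : Tlᵀ *ᵥ yδ = (Tlᵀ * Tl) *ᵥ w := by
    rw [← mulVec_mulVec, hw, mulVec_mulVec,
      transpose_mul_eq_of_range_le hRsym hRidem fun x => (hRrange _).mpr ⟨x, rfl⟩]
  have hxiter' : ∀ β, 0 < β → xiter β = (1 - tikhonovResidual (Tlᵀ * Tl) β ^ i) *ᵥ w :=
    fun β hβ => by rw [hxiter β hβ, hdata, iteratedTikhonov_eq hM hβ]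
  have hnoise' : (w - xtrue) ⬝ᵥ ((Tlᵀ * Tl) *ᵥ (w - xtrue)) ≤ δ ^ 2 := by
    have hres : Tl *ᵥ (w - xtrue) = R *ᵥ (yδ - y) := by
      rw [mulVec_sub, mulVec_sub, hw, ← hsol, hcompat]
    calc (w - xtrue) ⬝ᵥ ((Tlᵀ * Tl) *ᵥ (w - xtrue))
        = (R *ᵥ (yδ - y)) ⬝ᵥ (R *ᵥ (yδ - y)) := by
          rw [dotProduct_transpose_mul_self_mulVec, hres]
      _ ≤ (yδ - y) ⬝ᵥ (yδ - y) := dotProduct_mulVec_self_le_of_idempotent hRsym hRidem _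
      _ = (y - yδ) ⬝ᵥ (y - yδ) := by rw [← neg_sub, neg_dotProduct, dotProduct_neg, neg_neg]
      _ ≤ δ ^ 2 := (Real.sqrt_le_iff.mp (euclNorm_eq_sqrt_dotProduct _ ▸ hnoise)).2
  rw [← hw, pow_mul_dotProduct_inv_add_smul_one_pow_mulVec Tl hα] at hrule
  have hmono := monotoneOn_iteratedTikhonov_error hM i hα w xtrue (hnoise'.trans_eq hrule.symm)
  rw [euclNorm_eq_sqrt_dotProduct, euclNorm_eq_sqrt_dotProduct, hxiter' α hα,
    hxiter' α' (hα.trans_le hαα')]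
  exact Real.sqrt_le_sqrt (hmono Set.self_mem_Ici hαα' hαα')

/-- **Proposition 4.2.** For the iterated Arnoldi–Tikhonov method with the parameter
choice rule (R1), the reconstruction error is monotone in the regularization
parameter beyond the chosen parameter `α`. -/
theorem iAT_error_monotone
    {n ℓ : ℕ} (hℓ : 0 < ℓ) (hn : ℓ < n)
    (T : Matrix (Fin n) (Fin n) ℝ) (y yδ : Fin n → ℝ) (δ : ℝ)
    (hyδ : yδ ≠ 0) (hnoise : euclNorm (y - yδ) ≤ δ)
    -- Arnoldi decomposition `T V_ℓ = V_{ℓ+1} H`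
    (V : Matrix (Fin n) (Fin (ℓ + 1)) ℝ) (hV : Vᵀ * V = 1)
    (hV1 : ∀ r, V r 0 = yδ r / euclNorm yδ)
    (Vl : Matrix (Fin n) (Fin ℓ) ℝ) (hVl : Vl = V.submatrix id Fin.castSucc)
    (H : Matrix (Fin (ℓ + 1)) (Fin ℓ) ℝ) (hH : T * Vl = V * H)
    -- the Arnoldi approximation `T⁽ℓ⁾`
    (Tl : Matrix (Fin n) (Fin n) ℝ) (hTl : Tl = V * H * Vlᵀ)
    -- `R` is the orthogonal projection onto the column space of `T⁽ℓ⁾`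
    (R : Matrix (Fin n) (Fin n) ℝ)
    (hRsym : Rᵀ = R) (hRidem : R * R = R)
    (hRrange : ∀ v : Fin n → ℝ, (∃ x, R.mulVec x = v) ↔ ∃ x, Tl.mulVec x = v)
    -- exact solution and compatibility assumption (Assumption 4.1)
    (xtrue : Fin n → ℝ) (hsol : T.mulVec xtrue = y)
    (hcompat : R.mulVec (T.mulVec xtrue) = Tl.mulVec xtrue)
    (i : ℕ) (hi : 1 ≤ i)
    -- the iterated Arnoldi–Tikhonov approximations
    (xiter : ℝ → Fin n → ℝ)
    (hxiter : ∀ β : ℝ, 0 < β → xiter β =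
      ∑ k ∈ Finset.Icc 1 i, β ^ (k - 1) •
        ((Tlᵀ * Tl + β • (1 : Matrix (Fin n) (Fin n) ℝ))⁻¹ ^ k).mulVec (Tlᵀ.mulVec yδ))
    -- the parameter choice rule (R1)
    (hcond : δ ^ 2 < euclNorm (R.mulVec yδ) ^ 2)
    (α : ℝ) (hα : 0 < α)
    (hrule : α ^ (2 * i + 1) *
      (R.mulVec yδ) ⬝ᵥ
        (((Tl * Tlᵀ + α • (1 : Matrix (Fin n) (Fin n) ℝ))⁻¹ ^ (2 * i + 1)).mulVec
          (R.mulVec yδ)) = δ ^ 2) :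
    ∀ α' : ℝ, α ≤ α' →
      euclNorm (xtrue - xiter α) ≤ euclNorm (xtrue - xiter α') :=
  iAT_error_monotone_general T y yδ δ hnoise Tl R hRsym hRidem hRrange xtrue hsol hcompat i xiter
    hxiter α hα hrule
end

section
/- Let ℓ be a positive integer, let H ∈ ℝ^{(ℓ+1)×ℓ} with singular value decomposition H = U Σ Sᵀ, where U ∈ ℝ^{(ℓ+1)×(ℓ+1)} and S ∈ ℝ^{ℓ×ℓ} are orthogonal and Σ ∈ ℝ^{(ℓ+1)×ℓ} is diagonal with diagonal entries σ₁ ≥ … ≥ σ_q > σ_{q+1} = … = σ_ℓ = 0, where q = rank(H). Let I_q ∈ ℝ^{(ℓ+1)×(ℓ+1)} denote the diagonal matrix with first q diagonal entries 1 and the remaining entries 0. Let b ∈ ℝ^{ℓ+1}, set ŷ := I_q Uᵀ b, and fix an integer i ≥ 1, τ > 0 and δ > 0. If 0 < τ δ² < ‖ŷ‖₂², then there exists a unique α > 0 such that α^{2i+1} ŷᵀ (Σ Σᵀ + α I_{ℓ+1})^{−(2i+1)} ŷ = τ δ². -/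
open Matrix


/-!
The matrix `Σ Σᵀ + α I` is diagonal with entries `sᵣ + α`, where `sᵣ ≥ 0` are the squared
singular values padded by zeros, so the left-hand side of the equation equals
`∑ᵣ ŷᵣ² (α / (sᵣ + α))^(2i+1)`. Since `ŷᵣ = 0` whenever `sᵣ = 0`, each nonzero term is continuous
and strictly increasing in `α ≥ 0`, vanishes at `α = 0` and tends to `ŷᵣ²` as `α → ∞`. The sum thus
increases strictly and continuously from `0` to `‖ŷ‖²`, and takes the value `τ δ²` exactly once.
-/

open Filter Set Topology

section FilterSum

lemma div_add_self_lt_div_add_self {s a b : ℝ} (hs : 0 < s) (ha : 0 ≤ a) (hab : a < b) :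
    a / (s + a) < b / (s + b) := by
  rw [div_lt_div_iff₀ (by linarith) (by linarith)]
  nlinarith

lemma tendsto_div_add_self_atTop (s : ℝ) :
    Tendsto (fun α : ℝ => α / (s + α)) atTop (𝓝 1) := by
  have hsmall : Tendsto (fun α : ℝ => s / (s + α)) atTop (𝓝 0) :=
    tendsto_const_nhds.div_atTop (tendsto_atTop_add_const_left _ s tendsto_id)
  have hone : Tendsto (fun α : ℝ => 1 - s / (s + α)) atTop (𝓝 1) := by
    simpa using hsmall.const_sub 1
  refine hone.congr' ?_
  filter_upwards [eventually_gt_atTop (-s)] with α hα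
  field_simp [show s + α ≠ 0 by linarith]
  ring

variable {ι : Type*} [Fintype ι] (c s : ι → ℝ) (k : ℕ)

/-- `α / (s + α)` is the residual filter factor of Tikhonov regularization with parameter `α`
at squared singular value `s`. -/
noncomputable def filterSum (α : ℝ) : ℝ := ∑ r, c r * (α / (s r + α)) ^ k

lemma filterSum_zero (hk : k ≠ 0) : filterSum c s k 0 = 0 := by
  simp [filterSum, zero_pow hk]

lemma tendsto_filterSum_atTop : Tendsto (filterSum c s k) atTop (𝓝 (∑ r, c r)) := by
  refine tendsto_finsetSum _ fun r _ => ?_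
  simpa using ((tendsto_div_add_self_atTop (s r)).pow k).const_mul (c r)

variable {c s}

lemma continuousOn_filterSum (hcs : ∀ r, 0 < c r → 0 < s r) (hc : ∀ r, 0 ≤ c r) :
    ContinuousOn (filterSum c s k) (Ici 0) := by
  refine continuousOn_finsetSum _ fun r _ => ?_
  rcases (hc r).eq_or_lt with h | h
  · simp only [← h, zero_mul]
    exact continuousOn_const
  · have hs := hcs r h
    refine continuousOn_const.mul ((continuousOn_id.div (by fun_prop) fun α hα => ?_).pow k)
    have : (0 : ℝ) ≤ α := hα
    positivity

lemma strictMonoOn_filterSum (hcs : ∀ r, 0 < c r → 0 < s r) (hc : ∀ r, 0 ≤ c r)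
    (hc₀ : ∃ r, 0 < c r) (hk : k ≠ 0) :
    StrictMonoOn (filterSum c s k) (Ici 0) := by
  intro a (ha : 0 ≤ a) b _ hab
  obtain ⟨r₀, hr₀⟩ := hc₀
  refine Finset.sum_lt_sum (fun r _ => ?_) ⟨r₀, Finset.mem_univ _, ?_⟩
  · rcases (hc r).eq_or_lt with h | h
    · simp [← h]
    · have hs := hcs r h
      have hpos : 0 ≤ a / (s r + a) := by positivity
      exact mul_le_mul_of_nonneg_left
        (pow_le_pow_left₀ hpos (div_add_self_lt_div_add_self hs ha hab).le k) h.le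
  · have hs := hcs r₀ hr₀
    have hpos : 0 ≤ a / (s r₀ + a) := by positivity
    exact mul_lt_mul_of_pos_left
      (pow_lt_pow_left₀ (div_add_self_lt_div_add_self hs ha hab) hpos hk) hr₀

theorem existsUnique_filterSum_eq (hcs : ∀ r, 0 < c r → 0 < s r) (hc : ∀ r, 0 ≤ c r)
    (hk : k ≠ 0) {t : ℝ} (ht : 0 < t) (htc : t < ∑ r, c r) :
    ∃! α, 0 < α ∧ filterSum c s k α = t := by
  have hc₀ : ∃ r, 0 < c r := by
    by_contra! h
    exact (Finset.sum_nonpos fun r _ => h r).not_gt (ht.trans htc)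
  have hmono := strictMonoOn_filterSum k hcs hc hc₀ hk
  obtain ⟨A, hAt, hA⟩ :=
    (((tendsto_filterSum_atTop c s k).eventually (eventually_gt_nhds htc)).and
      (eventually_ge_atTop 0)).exists
  obtain ⟨α, hα, hαt⟩ := (continuousOn_filterSum k hcs hc).surjOn_Icc self_mem_Ici
    (mem_Ici.2 hA) ⟨(filterSum_zero c s k hk).symm ▸ ht.le, hAt.le⟩
  have hα₀ : 0 < α := by
    refine (mem_Ici.1 hα).lt_of_ne ?_
    rintro rfl
    exact ht.ne' (hαt ▸ filterSum_zero c s k hk)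
  exact ⟨α, ⟨hα₀, hαt⟩, fun β ⟨hβ, hβt⟩ =>
    hmono.injOn (mem_Ici.2 hβ.le) hα (hβt.trans hαt.symm)⟩

end FilterSum

lemma pow_mul_dotProduct_diagonal_add_smul_inv_pow_mulVec {K ι : Type*} [Field K] [Fintype ι]
    [DecidableEq ι] (d y : ι → K) {α : K} (hdα : ∀ r, d r + α ≠ 0) (k : ℕ) :
    α ^ k * y ⬝ᵥ ((diagonal d + α • (1 : Matrix ι ι K))⁻¹ ^ k *ᵥ y) =
      ∑ r, y r ^ 2 * (α / (d r + α)) ^ k := by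
  have hinv : (diagonal fun r => d r + α)⁻¹ = diagonal fun r => (d r + α)⁻¹ := by
    refine inv_eq_right_inv ?_
    simp only [diagonal_mul_diagonal, mul_inv_cancel₀ (hdα _), diagonal_one]
  rw [smul_one_eq_diagonal, diagonal_add, hinv, diagonal_pow, dotProduct, Finset.mul_sum]
  refine Finset.sum_congr rfl fun r _ => ?_
  rw [mulVec_diagonal, Pi.pow_apply]
  ring

lemma mul_transpose_eq_diagonal {R : Type*} [CommSemiring R] {m n : ℕ}
    (A : Matrix (Fin m) (Fin n) R)
    (hA : ∀ (r : Fin m) (c : Fin n), (r : ℕ) ≠ c → A r c = 0) :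
    A * Aᵀ = diagonal fun r => ∑ j, A r j ^ 2 := by
  ext r r'
  rw [mul_apply, diagonal_apply]
  split_ifs with h
  · simp [h, sq]
  · refine Finset.sum_eq_zero fun j _ => ?_
    by_cases hr : (r : ℕ) = j
    · rw [transpose_apply, hA r' j fun h' => h (Fin.ext (hr.trans h'.symm)), mul_zero]
    · rw [hA r j hr, zero_mul]

lemma mulVec_apply_eq_zero_of_le {R : Type*} [NonAssocSemiring R] {n q : ℕ}
    {P : Matrix (Fin n) (Fin n) R} (hP : ∀ r c, P r c = if r = c ∧ (r : ℕ) < q then 1 else 0)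
    (v : Fin n → R) {r : Fin n} (hr : q ≤ r) : (P *ᵥ v) r = 0 := by
  simp [mulVec, dotProduct, hP, not_lt.2 hr]

theorem reduced_parameter_rule_exists_unique_general
    {ℓ : ℕ}
    (U : Matrix (Fin (ℓ + 1)) (Fin (ℓ + 1)) ℝ)
    (σ : Fin ℓ → ℝ)
    (Sig : Matrix (Fin (ℓ + 1)) (Fin ℓ) ℝ)
    (hSig : ∀ r c, Sig r c = if (r : ℕ) = (c : ℕ) then σ c else 0)
    (q : ℕ) (hq : q ≤ ℓ)
    (hpos : ∀ c : Fin ℓ, (c : ℕ) < q → 0 < σ c)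
    (Iq : Matrix (Fin (ℓ + 1)) (Fin (ℓ + 1)) ℝ)
    (hIq : ∀ r c, Iq r c = if r = c ∧ (r : ℕ) < q then 1 else 0)
    (b : Fin (ℓ + 1) → ℝ)
    (yhat : Fin (ℓ + 1) → ℝ) (hyhat : yhat = Iq.mulVec (Uᵀ.mulVec b))
    (i : ℕ)
    (τ δ : ℝ) (hτ : 0 < τ) (hδ : 0 < δ)
    (hcond : τ * δ ^ 2 < euclNorm yhat ^ 2) :
    ∃! α : ℝ, 0 < α ∧
      α ^ (2 * i + 1) *
        yhat ⬝ᵥ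
          (((Sig * Sigᵀ + α • (1 : Matrix (Fin (ℓ + 1)) (Fin (ℓ + 1)) ℝ))⁻¹ ^ (2 * i + 1)).mulVec
            yhat) = τ * δ ^ 2 := by
  set s : Fin (ℓ + 1) → ℝ := fun r => ∑ j, Sig r j ^ 2
  have hdiag : Sig * Sigᵀ = diagonal s :=
    mul_transpose_eq_diagonal Sig fun r c h => by simp [hSig, h]
  have hs : ∀ r, 0 < yhat r ^ 2 → 0 < s r := by
    intro r hr
    have hrq : (r : ℕ) < q := by
      by_contra! h
      rw [hyhat, mulVec_apply_eq_zero_of_le hIq _ h] at hr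
      simp at hr
    have hrℓ : (r : ℕ) < ℓ := hrq.trans_le hq
    calc 0 < Sig r ⟨r, hrℓ⟩ ^ 2 := by
          rw [hSig, if_pos rfl]
          exact pow_pos (hpos _ hrq) 2
      _ ≤ s r := Finset.single_le_sum (fun j _ => sq_nonneg (Sig r j)) (Finset.mem_univ _)
  have hnorm : euclNorm yhat ^ 2 = ∑ r, yhat r ^ 2 :=
    Real.sq_sqrt (Finset.sum_nonneg fun r _ => sq_nonneg (yhat r))
  refine (existsUnique_congr fun α => and_congr_right fun hα => ?_).mpr <|
    existsUnique_filterSum_eq (2 * i + 1) hs (fun r => sq_nonneg (yhat r))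
      (2 * i).succ_ne_zero (by positivity) (hnorm ▸ hcond)
  have hsα : ∀ r, s r + α ≠ 0 := fun r =>
    (add_pos_of_nonneg_of_pos (Finset.sum_nonneg fun j _ => sq_nonneg (Sig r j)) hα).ne'
  rw [hdiag, pow_mul_dotProduct_diagonal_add_smul_inv_pow_mulVec s yhat hsα, filterSum]

/-- Existence and uniqueness of the solution of the parameter selection equation (10)
under condition (11), in terms of the singular value decomposition of the
Hessenberg matrix `H`. -/
theorem reduced_parameter_rule_exists_unique
    {ℓ : ℕ} (hℓ : 0 < ℓ)
    (H : Matrix (Fin (ℓ + 1)) (Fin ℓ) ℝ)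
    (U : Matrix (Fin (ℓ + 1)) (Fin (ℓ + 1)) ℝ) (hU : Uᵀ * U = 1)
    (S : Matrix (Fin ℓ) (Fin ℓ) ℝ) (hS : Sᵀ * S = 1)
    (σ : Fin ℓ → ℝ) (hσmono : ∀ j k : Fin ℓ, j ≤ k → σ k ≤ σ j)
    (Sig : Matrix (Fin (ℓ + 1)) (Fin ℓ) ℝ)
    (hSig : ∀ r c, Sig r c = if (r : ℕ) = (c : ℕ) then σ c else 0)
    (hSVD : H = U * Sig * Sᵀ)
    (q : ℕ) (hq : q ≤ ℓ) (hrank : H.rank = q)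
    (hpos : ∀ c : Fin ℓ, (c : ℕ) < q → 0 < σ c)
    (hzero : ∀ c : Fin ℓ, q ≤ (c : ℕ) → σ c = 0)
    (Iq : Matrix (Fin (ℓ + 1)) (Fin (ℓ + 1)) ℝ)
    (hIq : ∀ r c, Iq r c = if r = c ∧ (r : ℕ) < q then 1 else 0)
    (b : Fin (ℓ + 1) → ℝ)
    (yhat : Fin (ℓ + 1) → ℝ) (hyhat : yhat = Iq.mulVec (Uᵀ.mulVec b))
    (i : ℕ) (hi : 1 ≤ i)
    (τ δ : ℝ) (hτ : 0 < τ) (hδ : 0 < δ)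
    (hcond : τ * δ ^ 2 < euclNorm yhat ^ 2) :
    ∃! α : ℝ, 0 < α ∧
      α ^ (2 * i + 1) *
        yhat ⬝ᵥ
          (((Sig * Sigᵀ + α • (1 : Matrix (Fin (ℓ + 1)) (Fin (ℓ + 1)) ℝ))⁻¹ ^ (2 * i + 1)).mulVec
            yhat) = τ * δ ^ 2 :=
  reduced_parameter_rule_exists_unique_general U σ Sig hSig q hq hpos Iq hIq b yhat hyhat i τ δ hτ
    hδ hcond
end

section
/- Let n, ℓ be positive integers with ℓ < n, let y^δ ∈ ℝ^n with y^δ ≠ 0, let V_{ℓ+1} ∈ ℝ^{n×(ℓ+1)} have orthonormal columns with first column y^δ/‖y^δ‖₂, and let H ∈ ℝ^{(ℓ+1)×ℓ} have singular value decomposition H = U Σ Sᵀ with U, S orthogonal and Σ diagonal with exactly q = rank(H) positive singular values in the leading positions. Let I_q ∈ ℝ^{(ℓ+1)×(ℓ+1)} be the diagonal matrix with first q diagonal entries 1 and the rest 0, set V_ℓ to be the first ℓ columns of V_{ℓ+1}, T^{(ℓ)} := V_{ℓ+1} H V_ℓᵀ, and let R_ℓ be the orthogonal projection onto the column space of T^{(ℓ)}.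 Then ‖R_ℓ y^δ‖₂² = ‖I_q Uᵀ V_{ℓ+1}ᵀ y^δ‖₂². -/
open Matrix

lemma euclNorm_sq {m : ℕ} (x : Fin m → ℝ) : euclNorm x ^ 2 = ∑ r, x r ^ 2 :=
  Real.sq_sqrt (Finset.sum_nonneg fun r _ => sq_nonneg _)

lemma sum_sq_dot {m : ℕ} (x : Fin m → ℝ) : ∑ r, x r ^ 2 = x ⬝ᵥ x := by
  simp [dotProduct, sq]

lemma isometry_sum_sq {m k : ℕ} (M : Matrix (Fin m) (Fin k) ℝ) (hM : Mᵀ * M = 1)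
    (x : Fin k → ℝ) : euclNorm (M.mulVec x) = euclNorm x := by
  unfold euclNorm
  congr 1
  rw [sum_sq_dot, sum_sq_dot, dotProduct_mulVec, vecMul_mulVec, hM, vecMul_one]

lemma mulVec_ext {m k : ℕ} (A B : Matrix (Fin m) (Fin k) ℝ)
    (h : ∀ x, A.mulVec x = B.mulVec x) : A = B := by
  ext i j
  have := congrFun (h (Pi.single j 1)) i
  simpa using this

lemma proj_unique {m : ℕ} (P R : Matrix (Fin m) (Fin m) ℝ)
    (hPs : Pᵀ = P) (hRs : Rᵀ = R) (hPi : P * P = P) (hRi : R * R = R)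
    (hrange : ∀ v, (∃ x, P.mulVec x = v) ↔ ∃ x, R.mulVec x = v) : P = R := by
  have hRP : R * P = P := by
    apply mulVec_ext
    intro x
    obtain ⟨y, hy⟩ := (hrange (P.mulVec x)).mp ⟨x, rfl⟩
    rw [← Matrix.mulVec_mulVec, ← hy, Matrix.mulVec_mulVec, hRi]
  have hPR : P * R = R := by
    apply mulVec_ext
    intro x
    obtain ⟨y, hy⟩ := (hrange (R.mulVec x)).mpr ⟨x, rfl⟩
    rw [← Matrix.mulVec_mulVec, ← hy, Matrix.mulVec_mulVec, hPi]
  calc P = Pᵀ := hPs.symm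
    _ = (R * P)ᵀ := by rw [hRP]
    _ = Pᵀ * Rᵀ := Matrix.transpose_mul _ _
    _ = P * R := by rw [hPs, hRs]
    _ = R := hPR

/-- Equation (11): `‖R_ℓ yδ‖₂² = ‖I_q Uᵀ V_{ℓ+1}ᵀ yδ‖₂²`. -/
theorem norm_projected_data
    {n ℓ : ℕ} (hℓ : 0 < ℓ) (hn : ℓ < n)
    (yδ : Fin n → ℝ) (hyδ : yδ ≠ 0)
    (V : Matrix (Fin n) (Fin (ℓ + 1)) ℝ) (hV : Vᵀ * V = 1)
    (hV1 : ∀ r, V r 0 = yδ r / euclNorm yδ)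
    (Vl : Matrix (Fin n) (Fin ℓ) ℝ) (hVl : Vl = V.submatrix id Fin.castSucc)
    (H : Matrix (Fin (ℓ + 1)) (Fin ℓ) ℝ)
    (U : Matrix (Fin (ℓ + 1)) (Fin (ℓ + 1)) ℝ) (hU : Uᵀ * U = 1)
    (S : Matrix (Fin ℓ) (Fin ℓ) ℝ) (hS : Sᵀ * S = 1)
    (σ : Fin ℓ → ℝ)
    (Sig : Matrix (Fin (ℓ + 1)) (Fin ℓ) ℝ)
    (hSig : ∀ r c, Sig r c = if (r : ℕ) = (c : ℕ) then σ c else 0)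
    (hSVD : H = U * Sig * Sᵀ)
    (q : ℕ) (hq : q ≤ ℓ) (hrank : H.rank = q)
    (hpos : ∀ c : Fin ℓ, (c : ℕ) < q → 0 < σ c)
    (hzero : ∀ c : Fin ℓ, q ≤ (c : ℕ) → σ c = 0)
    (Iq : Matrix (Fin (ℓ + 1)) (Fin (ℓ + 1)) ℝ)
    (hIq : ∀ r c, Iq r c = if r = c ∧ (r : ℕ) < q then 1 else 0)
    (Tl : Matrix (Fin n) (Fin n) ℝ) (hTl : Tl = V * H * Vlᵀ)
    -- `Rl` is the orthogonal projection onto the column space of `T⁽ℓ⁾`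
    (Rl : Matrix (Fin n) (Fin n) ℝ)
    (hRsym : Rlᵀ = Rl) (hRidem : Rl * Rl = Rl)
    (hRrange : ∀ v : Fin n → ℝ, (∃ x, Rl.mulVec x = v) ↔ ∃ x, Tl.mulVec x = v) :
    euclNorm (Rl.mulVec yδ) ^ 2 = euclNorm (Iq.mulVec (Uᵀ.mulVec (Vᵀ.mulVec yδ))) ^ 2 := by
  set W : Matrix (Fin n) (Fin (ℓ + 1)) ℝ := V * U with hWdef
  have hW : Wᵀ * W = 1 := by
    rw [hWdef, Matrix.transpose_mul, Matrix.mul_assoc, ← Matrix.mul_assoc Vᵀ V U, hV,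
      Matrix.one_mul, hU]
  have hIqd : Iq = Matrix.diagonal (fun r : Fin (ℓ + 1) => if (r : ℕ) < q then (1 : ℝ) else 0) := by
    ext r c
    rw [hIq, Matrix.diagonal]
    by_cases h : r = c
    · subst h; simp
    · simp [h]
  have hIqsym : Iqᵀ = Iq := by rw [hIqd, Matrix.diagonal_transpose]
  have hIqIq : Iq * Iq = Iq := by
    ext r c
    rw [Matrix.mul_apply, Finset.sum_eq_single r]
    · rw [hIq r r, hIq r c]
      by_cases h : (r : ℕ) < q
      · simp [h]
      · simp [h]
    · intro k _ hk
      rw [hIq, if_neg (by tauto), zero_mul]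
    · intro h; exact absurd (Finset.mem_univ r) h
  have hIqSig : Iq * Sig = Sig := by
    ext r c
    rw [Matrix.mul_apply, Finset.sum_eq_single r]
    · rw [hIq]
      simp only [and_true, if_pos rfl, true_and]
      by_cases h : (r : ℕ) < q
      · rw [if_pos h, one_mul]
      · rw [if_neg h, zero_mul, hSig]
        by_cases h2 : (r : ℕ) = (c : ℕ)
        · rw [if_pos h2, hzero c (by omega)]
        · rw [if_neg h2]
    · intro k _ hk
      rw [hIq, if_neg (by tauto), zero_mul]
    · intro h; exact absurd (Finset.mem_univ r) h
  have hVlV : Vlᵀ * Vl = 1 := by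
    ext a b
    have h1 : (Vᵀ * V) a.castSucc b.castSucc = (1 : Matrix (Fin (ℓ+1)) (Fin (ℓ+1)) ℝ)
        a.castSucc b.castSucc := by rw [hV]
    rw [Matrix.mul_apply, Matrix.one_apply] at h1
    simp only [Matrix.transpose_apply] at h1
    rw [Matrix.mul_apply, Matrix.one_apply]
    simp only [hVl, Matrix.transpose_apply, Matrix.submatrix_apply, id_eq]
    rw [h1]
    simp [Fin.castSucc_inj]
  set P : Matrix (Fin n) (Fin n) ℝ := W * Iq * Wᵀ with hPdef
  have hPsym : Pᵀ = P := by
    rw [hPdef]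
    simp only [Matrix.transpose_mul, Matrix.transpose_transpose, hIqsym, Matrix.mul_assoc]
  have hPidem : P * P = P := by
    rw [hPdef]
    simp only [Matrix.mul_assoc]
    rw [← Matrix.mul_assoc Wᵀ W (Iq * Wᵀ), hW, Matrix.one_mul,
      ← Matrix.mul_assoc Iq Iq Wᵀ, hIqIq]
  have hTlW : Tl = W * Sig * (Sᵀ * Vlᵀ) := by
    rw [hTl, hSVD, hWdef]
    simp only [Matrix.mul_assoc]
  have hPTl : P * Tl = Tl := by
    rw [hTlW, hPdef]
    simp only [Matrix.mul_assoc]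
    rw [← Matrix.mul_assoc Wᵀ W (Sig * (Sᵀ * Vlᵀ)), hW, Matrix.one_mul,
      ← Matrix.mul_assoc Iq Sig (Sᵀ * Vlᵀ), hIqSig]
  have hTVS : Tl * Vl * S = W * Sig := by
    rw [hTlW]
    simp only [Matrix.mul_assoc]
    rw [← Matrix.mul_assoc Vlᵀ Vl S, hVlV, Matrix.one_mul, hS, Matrix.mul_one]
  -- range P = range Tl
  have hPT : ∀ v : Fin n → ℝ, (∃ x, P.mulVec x = v) ↔ ∃ x, Tl.mulVec x = v := by
    intro v
    constructor
    · rintro ⟨x, rfl⟩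
      obtain ⟨z, hSz⟩ : ∃ z : Fin ℓ → ℝ, Sig.mulVec z = Iq.mulVec (Wᵀ.mulVec x) := by
        refine ⟨fun c => if h : (c : ℕ) < q then (Wᵀ.mulVec x) c.castSucc / σ c else 0, ?_⟩
        funext r
        rw [hIqd, Matrix.mulVec_diagonal]
        by_cases hr : (r : ℕ) < ℓ
        · have hσ : Sig r ⟨(r : ℕ), hr⟩ = σ ⟨(r : ℕ), hr⟩ := by rw [hSig]; simp
          have hcast : Fin.castSucc ⟨(r : ℕ), hr⟩ = r := by ext; simp
          rw [Matrix.mulVec, dotProduct, Finset.sum_eq_single ⟨(r : ℕ), hr⟩]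
          · rw [hσ]
            simp only []
            by_cases hrq : (r : ℕ) < q
            · rw [if_pos hrq, dif_pos (show ((⟨(r : ℕ), hr⟩ : Fin ℓ) : ℕ) < q from hrq),
                mul_div_cancel₀ _ (ne_of_gt (hpos ⟨(r : ℕ), hr⟩ hrq)), hcast, one_mul]
            · rw [if_neg hrq, dif_neg (show ¬ ((⟨(r : ℕ), hr⟩ : Fin ℓ) : ℕ) < q from hrq),
                mul_zero, zero_mul]
          · intro k _ hk
            rw [hSig, if_neg, zero_mul]
            intro hrk
            exact hk (Fin.ext (by simpa using hrk.symm))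
          · intro h; exact absurd (Finset.mem_univ _) h
        · have hrq : ¬ (r : ℕ) < q := by omega
          rw [if_neg hrq, zero_mul]
          rw [Matrix.mulVec, dotProduct]
          apply Finset.sum_eq_zero
          intro c _
          rw [hSig, if_neg (by omega), zero_mul]
      refine ⟨Vl.mulVec (S.mulVec z), ?_⟩
      show Tl.mulVec (Vl.mulVec (S.mulVec z)) = (W * Iq * Wᵀ).mulVec x
      calc Tl.mulVec (Vl.mulVec (S.mulVec z)) = (Tl * Vl * S).mulVec z := by
            rw [Matrix.mulVec_mulVec, Matrix.mulVec_mulVec]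
        _ = W.mulVec (Sig.mulVec z) := by rw [hTVS, ← Matrix.mulVec_mulVec]
        _ = W.mulVec (Iq.mulVec (Wᵀ.mulVec x)) := by rw [hSz]
        _ = (W * Iq * Wᵀ).mulVec x := by rw [Matrix.mulVec_mulVec, Matrix.mulVec_mulVec]
    · rintro ⟨x, rfl⟩
      exact ⟨Tl.mulVec x, by rw [Matrix.mulVec_mulVec, hPTl]⟩
  have hRP : P = Rl := proj_unique P Rl hPsym hRsym hPidem hRidem
    (fun v => (hPT v).trans (hRrange v).symm)
  rw [← hRP]
  have hWt : Wᵀ.mulVec yδ = Uᵀ.mulVec (Vᵀ.mulVec yδ) := by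
    rw [Matrix.mulVec_mulVec, hWdef, Matrix.transpose_mul]
  have hPy : P.mulVec yδ = W.mulVec (Iq.mulVec (Uᵀ.mulVec (Vᵀ.mulVec yδ))) := by
    rw [hPdef, ← Matrix.mulVec_mulVec yδ (W * Iq) Wᵀ, hWt, ← Matrix.mulVec_mulVec _ W Iq]
  rw [hPy, isometry_sum_sq W hW]
end

section
/- Let n, ℓ be positive integers with ℓ < n, let T ∈ ℝ^{n×n}, let y^δ ∈ ℝ^n, let V_{ℓ+1} ∈ ℝ^{n×(ℓ+1)} have orthonormal columns, let V_ℓ consist of the first ℓ columns of V_{ℓ+1}, let H ∈ ℝ^{(ℓ+1)×ℓ} satisfy T V_ℓ = V_{ℓ+1} H, and set T^{(ℓ)} := V_{ℓ+1} H V_ℓᵀ. Fix α > 0 and an integer i ≥ 1. Then the iterated Arnoldi–Tikhonov solution x_{α,i}^{δ,ℓ} := Σ_{k=1}^i α^{k−1} (T^{(ℓ)ᵀ} T^{(ℓ)} + α I_n)^{−k} T^{(ℓ)ᵀ} y^δ satisfies x_{α,i}^{δ,ℓ} = V_ℓ z, where z := Σ_{k=1}^i α^{k−1} (Hᵀ H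 + α I_ℓ)^{−k} Hᵀ (V_{ℓ+1}ᵀ y^δ). -/
/-!
Write `W = V_ℓ`. Since `T^{(ℓ)} = V_{ℓ+1} H Wᵀ` and `V_{ℓ+1}`, `W` have orthonormal columns,
`T^{(ℓ)ᵀ} T^{(ℓ)} = W (Hᵀ H) Wᵀ`, so `B := T^{(ℓ)ᵀ} T^{(ℓ)} + α I_n` and `S := Hᵀ H + α I_ℓ`
are intertwined by `W`: `B W = W S`. Both are positive definite, so the relation passes to
`B⁻ᵏ W = W S⁻ᵏ`, and with `T^{(ℓ)ᵀ} = W Hᵀ V_{ℓ+1}ᵀ` each summand of the large solution is `W`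
applied to the corresponding summand of the small one.
-/

open Matrix

namespace Matrix

variable {m n p R : Type*}

theorem transpose_mul_submatrix_self_eq_one [Fintype m] [DecidableEq n] [DecidableEq p]
    [CommRing R] {V : Matrix m n R} (hV : Vᵀ * V = 1)
    {f : p → n} (hf : Function.Injective f) :
    (V.submatrix id f)ᵀ * V.submatrix id f = 1 := by
  rw [transpose_submatrix, ← submatrix_mul _ _ _ _ _ Function.bijective_id, hV,
    submatrix_one _ hf]

theorem isUnit_transpose_mul_self_add_smul_one [Fintype m] [Fintype n] [DecidableEq n]
    (A : Matrix m n ℝ) {α : ℝ} (hα : 0 < α) :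
    IsUnit (Aᵀ * A + α • (1 : Matrix n n ℝ)) :=
  (PosDef.posSemidef_add (posSemidef_conjTranspose_mul_self A) (PosDef.one.smul hα)).isUnit

theorem mul_mul_transpose_transpose_mul_self [Fintype m] [Fintype n] [Fintype p]
    [DecidableEq p] [CommRing R]
    {V : Matrix m p R} (hV : Vᵀ * V = 1) (H : Matrix p n R) (W : Matrix m n R) :
    (V * H * Wᵀ)ᵀ * (V * H * Wᵀ) = W * (Hᵀ * H) * Wᵀ := by
  simp only [transpose_mul, transpose_transpose, Matrix.mul_assoc]
  rw [← Matrix.mul_assoc Vᵀ, hV, Matrix.one_mul]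

theorem mul_mul_transpose_add_smul_one_mul [Fintype m] [Fintype n] [DecidableEq m]
    [DecidableEq n] [CommRing R] {W : Matrix m n R} (hW : Wᵀ * W = 1)
    (M : Matrix n n R) (α : R) :
    (W * M * Wᵀ + α • (1 : Matrix m m R)) * W = W * (M + α • (1 : Matrix n n R)) := by
  rw [Matrix.add_mul, Matrix.mul_assoc, Matrix.mul_assoc, hW, Matrix.mul_one, Matrix.mul_add,
    smul_mul, Matrix.one_mul, Matrix.mul_smul, Matrix.mul_one]

theorem inv_pow_mul_eq_mul_inv_pow [Fintype m] [Fintype n] [DecidableEq m] [DecidableEq n]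
    [CommRing R] {B : Matrix m m R} {S : Matrix n n R}
    {W : Matrix m n R} (hB : IsUnit B) (hS : IsUnit S) (h : B * W = W * S) (k : ℕ) :
    B⁻¹ ^ k * W = W * S⁻¹ ^ k := by
  have hinv : B⁻¹ * W = W * S⁻¹ := by
    rw [isUnit_iff_isUnit_det] at hB hS
    calc B⁻¹ * W = B⁻¹ * (W * S * S⁻¹) := by rw [mul_nonsing_inv_cancel_right _ _ hS]
      _ = B⁻¹ * (B * (W * S⁻¹)) := by rw [← h, Matrix.mul_assoc]
      _ = W * S⁻¹ := nonsing_inv_mul_cancel_left _ _ hB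
  induction k with
  | zero => simp
  | succ k ih =>
    rw [pow_succ, pow_succ, Matrix.mul_assoc, hinv, ← Matrix.mul_assoc, ih, Matrix.mul_assoc]

end Matrix

theorem iAT_reduction_identity_general
    {n ℓ : ℕ}
    (yδ : Fin n → ℝ)
    (V : Matrix (Fin n) (Fin (ℓ + 1)) ℝ) (hV : Vᵀ * V = 1)
    (Vl : Matrix (Fin n) (Fin ℓ) ℝ) (hVl : Vl = V.submatrix id Fin.castSucc)
    (H : Matrix (Fin (ℓ + 1)) (Fin ℓ) ℝ)
    (Tl : Matrix (Fin n) (Fin n) ℝ) (hTl : Tl = V * H * Vlᵀ)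
    (α : ℝ) (hα : 0 < α) (i : ℕ)
    (x : Fin n → ℝ)
    (hx : x = ∑ k ∈ Finset.Icc 1 i, α ^ (k - 1) •
      ((Tlᵀ * Tl + α • (1 : Matrix (Fin n) (Fin n) ℝ))⁻¹ ^ k).mulVec (Tlᵀ.mulVec yδ))
    (zsmall : Fin ℓ → ℝ)
    (hz : zsmall = ∑ k ∈ Finset.Icc 1 i, α ^ (k - 1) •
      ((Hᵀ * H + α • (1 : Matrix (Fin ℓ) (Fin ℓ) ℝ))⁻¹ ^ k).mulVec
        (Hᵀ.mulVec (Vᵀ.mulVec yδ))) :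
    x = Vl.mulVec zsmall := by
  have hVl_orth : Vlᵀ * Vl = 1 :=
    hVl ▸ transpose_mul_submatrix_self_eq_one hV (Fin.castSucc_injective ℓ)
  have hTl_yδ : Tlᵀ *ᵥ yδ = Vl *ᵥ (Hᵀ *ᵥ (Vᵀ *ᵥ yδ)) := by
    simp only [hTl, transpose_mul, transpose_transpose, mulVec_mulVec, Matrix.mul_assoc]
  have hintertwine :
      (Tlᵀ * Tl + α • (1 : Matrix (Fin n) (Fin n) ℝ)) * Vl = Vl * (Hᵀ * H + α • 1) := by
    rw [hTl, mul_mul_transpose_transpose_mul_self hV,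
      mul_mul_transpose_add_smul_one_mul hVl_orth]
  have hpow (k : ℕ) :
      (Tlᵀ * Tl + α • (1 : Matrix (Fin n) (Fin n) ℝ))⁻¹ ^ k * Vl = Vl * (Hᵀ * H + α • 1)⁻¹ ^ k :=
    inv_pow_mul_eq_mul_inv_pow (isUnit_transpose_mul_self_add_smul_one Tl hα)
      (isUnit_transpose_mul_self_add_smul_one H hα) hintertwine k
  rw [hx, hz, mulVec_sum]
  refine Finset.sum_congr rfl fun k _ => ?_
  rw [mulVec_smul, hTl_yδ, mulVec_mulVec, hpow, ← mulVec_mulVec]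

/-- The iterated Arnoldi–Tikhonov solution of the large problem equals `V_ℓ z`, where
`z` solves the small projected problem. -/
theorem iAT_reduction_identity
    {n ℓ : ℕ} (hℓ : 0 < ℓ) (hn : ℓ < n)
    (T : Matrix (Fin n) (Fin n) ℝ) (yδ : Fin n → ℝ)
    (V : Matrix (Fin n) (Fin (ℓ + 1)) ℝ) (hV : Vᵀ * V = 1)
    (Vl : Matrix (Fin n) (Fin ℓ) ℝ) (hVl : Vl = V.submatrix id Fin.castSucc)
    (H : Matrix (Fin (ℓ + 1)) (Fin ℓ) ℝ) (hH : T * Vl = V * H)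
    (Tl : Matrix (Fin n) (Fin n) ℝ) (hTl : Tl = V * H * Vlᵀ)
    (α : ℝ) (hα : 0 < α) (i : ℕ) (hi : 1 ≤ i)
    (x : Fin n → ℝ)
    (hx : x = ∑ k ∈ Finset.Icc 1 i, α ^ (k - 1) •
      ((Tlᵀ * Tl + α • (1 : Matrix (Fin n) (Fin n) ℝ))⁻¹ ^ k).mulVec (Tlᵀ.mulVec yδ))
    (zsmall : Fin ℓ → ℝ)
    (hz : zsmall = ∑ k ∈ Finset.Icc 1 i, α ^ (k - 1) •
      ((Hᵀ * H + α • (1 : Matrix (Fin ℓ) (Fin ℓ) ℝ))⁻¹ ^ k).mulVec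
        (Hᵀ.mulVec (Vᵀ.mulVec yδ))) :
    x = Vl.mulVec zsmall :=
  iAT_reduction_identity_general yδ V hV Vl hVl H Tl hTl α hα i x hx zsmall hz
end

section
/- Let n, ℓ be positive integers with ℓ < n, let y^δ ∈ ℝ^n with y^δ ≠ 0, let V_{ℓ+1} ∈ ℝ^{n×(ℓ+1)} have orthonormal columns with first column y^δ/‖y^δ‖₂, let V_ℓ consist of the first ℓ columns of V_{ℓ+1}, and let H ∈ ℝ^{(ℓ+1)×ℓ} have singular value decomposition H = U Σ Sᵀ with U, S orthogonal and Σ diagonal with exactly q = rank(H) positive singular values in the leading positions. Let I_q ∈ ℝ^{(ℓ+1)×(ℓ+1)} be the diagonal matrix with first q diagonal entries 1 and the rest 0, set ŷ := I_q Uᵀ V_{ℓ+1}ᵀ y^δ, T^{(ℓ)} := V_{ℓ+1} H V_ℓᵀ, and let R_ℓ be the orthogonal projection onto the column space of T^{(ℓ)}. Then for every α > 0 and every integer i ≥ 1, α^{2i+1} (R_ℓ y^δ)ᵀ (T^{(ℓ)} T^{(ℓ)ᵀ} + α I_n)^{−(2i+1)} (R_ℓ y^δ) = α^{2i+1} ŷᵀ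 (Σ Σᵀ + α I_{ℓ+1})^{−(2i+1)} ŷ. -/
open Matrix

set_option linter.unusedSectionVars false
section Aux
variable {n k : Type*} [Fintype n] [Fintype k] [DecidableEq n] [DecidableEq k]

lemma aux_WtQ (W : Matrix n k ℝ) (hW : Wᵀ * W = 1) :
    Wᵀ * (1 - W * Wᵀ) = 0 := by
  rw [Matrix.mul_sub, Matrix.mul_one, ← Matrix.mul_assoc, hW, Matrix.one_mul, sub_self]

lemma aux_QW (W : Matrix n k ℝ) (hW : Wᵀ * W = 1) :
    (1 - W * Wᵀ) * W = 0 := by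
  rw [Matrix.sub_mul, Matrix.one_mul, Matrix.mul_assoc, hW, Matrix.mul_one, sub_self]

lemma aux_sandwich (W : Matrix n k ℝ) (hW : Wᵀ * W = 1) (X Y : Matrix k k ℝ) :
    (W * X * Wᵀ) * (W * Y * Wᵀ) = W * (X * Y) * Wᵀ := by
  calc (W * X * Wᵀ) * (W * Y * Wᵀ) = W * (X * ((Wᵀ * W) * (Y * Wᵀ))) := by
        simp only [Matrix.mul_assoc]
    _ = W * (X * Y) * Wᵀ := by rw [hW, Matrix.one_mul]; simp only [Matrix.mul_assoc]

lemma aux_sandwichQ (W : Matrix n k ℝ) (hW : Wᵀ * W = 1) (X : Matrix k k ℝ) :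
    (W * X * Wᵀ) * (1 - W * Wᵀ) = 0 := by
  rw [Matrix.mul_assoc, Matrix.mul_assoc, aux_WtQ W hW, Matrix.mul_zero, Matrix.mul_zero]

lemma aux_Qsandwich (W : Matrix n k ℝ) (hW : Wᵀ * W = 1) (X : Matrix k k ℝ) :
    (1 - W * Wᵀ) * (W * X * Wᵀ) = 0 := by
  simp only [← Matrix.mul_assoc]
  rw [aux_QW W hW, Matrix.zero_mul, Matrix.zero_mul]

lemma aux_QQ (W : Matrix n k ℝ) (hW : Wᵀ * W = 1) :
    (1 - W * Wᵀ) * (1 - W * Wᵀ) = 1 - W * Wᵀ := by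
  have h : W * Wᵀ * (W * Wᵀ) = W * Wᵀ := by
    rw [Matrix.mul_assoc, ← Matrix.mul_assoc Wᵀ, hW, Matrix.one_mul]
  rw [Matrix.mul_sub, Matrix.mul_one, Matrix.sub_mul, Matrix.one_mul, h]
  abel

lemma aux_symm (W : Matrix n k ℝ) (X : Matrix k k ℝ) (hX : Xᵀ = X) :
    (W * X * Wᵀ)ᵀ = W * X * Wᵀ := by
  rw [transpose_mul, transpose_mul, transpose_transpose, hX, Matrix.mul_assoc]

lemma aux_pow (W : Matrix n k ℝ) (hW : Wᵀ * W = 1) (B : Matrix k k ℝ) (c : ℝ) :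
    ∀ j : ℕ, (W * B * Wᵀ + c • (1 - W * Wᵀ)) ^ j
      = W * B ^ j * Wᵀ + c ^ j • (1 - W * Wᵀ) := by
  intro j
  induction j with
  | zero =>
    simp only [pow_zero, Matrix.mul_one, one_smul]
    abel
  | succ j ih =>
    rw [pow_succ, ih, pow_succ, pow_succ]
    rw [add_mul, mul_add, mul_add, aux_sandwich W hW, Matrix.mul_smul, aux_sandwichQ W hW,
      Matrix.smul_mul, Matrix.smul_mul, aux_Qsandwich W hW, Matrix.mul_smul, aux_QQ W hW,
      smul_zero, smul_zero, add_zero, zero_add, smul_smul]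

lemma aux_inv (W : Matrix n k ℝ) (hW : Wᵀ * W = 1) (D Ai : Matrix k k ℝ) {α : ℝ} (hα : α ≠ 0)
    (hA : (D + α • (1 : Matrix k k ℝ)) * Ai = 1) :
    (W * D * Wᵀ + α • (1 : Matrix n n ℝ)) * (W * Ai * Wᵀ + α⁻¹ • (1 - W * Wᵀ)) = 1 := by
  have h1 : (W * D * Wᵀ) * (W * Ai * Wᵀ) = W * (D * Ai) * Wᵀ := aux_sandwich W hW D Ai
  have h2 : α • (W * Ai * Wᵀ) = W * ((α • (1 : Matrix k k ℝ)) * Ai) * Wᵀ := by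
    rw [Matrix.smul_mul, Matrix.one_mul, Matrix.mul_smul, Matrix.smul_mul]
  rw [mul_add, add_mul, add_mul, h1, Matrix.mul_smul, aux_sandwichQ W hW, smul_zero, zero_add,
    Matrix.smul_mul, Matrix.one_mul, Matrix.smul_mul, Matrix.one_mul,
    smul_smul, mul_inv_cancel₀ hα, one_smul, h2]
  have h3 : W * (D * Ai) * Wᵀ + W * (α • (1 : Matrix k k ℝ) * Ai) * Wᵀ
      = W * ((D + α • (1 : Matrix k k ℝ)) * Ai) * Wᵀ := by
    rw [add_mul, Matrix.mul_add, Matrix.add_mul]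
  rw [h3, hA, Matrix.mul_one]
  abel
end Aux

set_option maxHeartbeats 1000000 in
/-- The parameter selection equation (10) is the reduced, computable form of the
full-space equation (4) applied to the Arnoldi approximation `T⁽ℓ⁾`. -/
theorem parameter_rule_reduction_identity
    {n ℓ : ℕ} (hℓ : 0 < ℓ) (hn : ℓ < n)
    (yδ : Fin n → ℝ) (hyδ : yδ ≠ 0)
    (V : Matrix (Fin n) (Fin (ℓ + 1)) ℝ) (hV : Vᵀ * V = 1)
    (hV1 : ∀ r, V r 0 = yδ r / euclNorm yδ)
    (Vl : Matrix (Fin n) (Fin ℓ) ℝ) (hVl : Vl = V.submatrix id Fin.castSucc)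
    (H : Matrix (Fin (ℓ + 1)) (Fin ℓ) ℝ)
    (U : Matrix (Fin (ℓ + 1)) (Fin (ℓ + 1)) ℝ) (hU : Uᵀ * U = 1)
    (S : Matrix (Fin ℓ) (Fin ℓ) ℝ) (hS : Sᵀ * S = 1)
    (σ : Fin ℓ → ℝ)
    (Sig : Matrix (Fin (ℓ + 1)) (Fin ℓ) ℝ)
    (hSig : ∀ r c, Sig r c = if (r : ℕ) = (c : ℕ) then σ c else 0)
    (hSVD : H = U * Sig * Sᵀ)
    (q : ℕ) (hq : q ≤ ℓ) (hrank : H.rank = q)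
    (hpos : ∀ c : Fin ℓ, (c : ℕ) < q → 0 < σ c)
    (hzero : ∀ c : Fin ℓ, q ≤ (c : ℕ) → σ c = 0)
    (Iq : Matrix (Fin (ℓ + 1)) (Fin (ℓ + 1)) ℝ)
    (hIq : ∀ r c, Iq r c = if r = c ∧ (r : ℕ) < q then 1 else 0)
    (yhat : Fin (ℓ + 1) → ℝ) (hyhat : yhat = Iq.mulVec (Uᵀ.mulVec (Vᵀ.mulVec yδ)))
    (Tl : Matrix (Fin n) (Fin n) ℝ) (hTl : Tl = V * H * Vlᵀ)
    -- `Rl` is the orthogonal projection onto the column space of `T⁽ℓ⁾`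
    (Rl : Matrix (Fin n) (Fin n) ℝ)
    (hRsym : Rlᵀ = Rl) (hRidem : Rl * Rl = Rl)
    (hRrange : ∀ v : Fin n → ℝ, (∃ x, Rl.mulVec x = v) ↔ ∃ x, Tl.mulVec x = v) :
    ∀ α : ℝ, 0 < α → ∀ i : ℕ, 1 ≤ i →
      α ^ (2 * i + 1) *
        (Rl.mulVec yδ) ⬝ᵥ
          (((Tl * Tlᵀ + α • (1 : Matrix (Fin n) (Fin n) ℝ))⁻¹ ^ (2 * i + 1)).mulVec
            (Rl.mulVec yδ)) =
      α ^ (2 * i + 1) *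
        yhat ⬝ᵥ
          (((Sig * Sigᵀ + α • (1 : Matrix (Fin (ℓ + 1)) (Fin (ℓ + 1)) ℝ))⁻¹ ^ (2 * i + 1)).mulVec
            yhat) := by
  intro α hα i hi
  set W : Matrix (Fin n) (Fin (ℓ + 1)) ℝ := V * U with hWdef
  -- orthonormality facts
  have hW : Wᵀ * W = 1 := by
    have h1 : Vᵀ * (V * U) = U := by rw [← Matrix.mul_assoc, hV, Matrix.one_mul]
    rw [hWdef, transpose_mul, Matrix.mul_assoc, h1, hU]
  have hVlV : Vlᵀ * Vl = 1 := by
    have h1 : ∀ a b : Fin ℓ, (Vlᵀ * Vl) a b = (Vᵀ * V) a.castSucc b.castSucc := by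
      intro a b
      simp [mul_apply, hVl, transpose_apply, submatrix_apply]
    ext a b
    rw [h1, hV]
    by_cases h : a = b
    · subst h; simp [one_apply]
    · rw [one_apply_ne (fun hh => h (Fin.castSucc_injective _ hh)), one_apply_ne h]
  have keyVl : ∀ (κ : Type) (X : Matrix (Fin ℓ) κ ℝ), Vlᵀ * (Vl * X) = X := by
    intro κ X; rw [← Matrix.mul_assoc, hVlV, Matrix.one_mul]
  have keyS : ∀ (κ : Type) (X : Matrix (Fin ℓ) κ ℝ), Sᵀ * (S * X) = X := by
    intro κ X; rw [← Matrix.mul_assoc, hS, Matrix.one_mul]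
  have keyW : ∀ (κ : Type) (X : Matrix (Fin (ℓ + 1)) κ ℝ), Wᵀ * (W * X) = X := by
    intro κ X; rw [← Matrix.mul_assoc, hW, Matrix.one_mul]
  have hTl2 : Tl = W * Sig * Sᵀ * Vlᵀ := by
    rw [hTl, hSVD, hWdef]; simp only [Matrix.mul_assoc]
  have hTT : Tl * Tlᵀ = W * (Sig * Sigᵀ) * Wᵀ := by
    rw [hTl2]
    simp only [transpose_mul, transpose_transpose, Matrix.mul_assoc]
    rw [keyVl, keyS]
  -- the reduced matrix is diagonal
  set d : Fin (ℓ + 1) → ℝ := fun r => (∑ k, Sig r k * Sig r k) + α with hd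
  have hAdiag : Sig * Sigᵀ + α • (1 : Matrix (Fin (ℓ + 1)) (Fin (ℓ + 1)) ℝ) = diagonal d := by
    ext r c
    by_cases h : r = c
    · subst h
      simp [diagonal_apply_eq, mul_apply, hd, Matrix.smul_apply, one_apply_eq]
    · have hrc : (r : ℕ) ≠ (c : ℕ) := fun hh => h (Fin.ext hh)
      rw [diagonal_apply_ne _ h]
      simp only [Matrix.add_apply, Matrix.smul_apply, one_apply_ne h, smul_zero, add_zero,
        mul_apply, transpose_apply]
      apply Finset.sum_eq_zero
      intro k _
      rw [hSig r k, hSig c k]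
      by_cases h1 : (r : ℕ) = (k : ℕ)
      · rw [if_neg (show ¬(c : ℕ) = (k : ℕ) from fun h2 => hrc (h1.trans h2.symm)), mul_zero]
      · rw [if_neg h1, zero_mul]
  have hdpos : ∀ r, 0 < d r := by
    intro r
    have : (0:ℝ) ≤ ∑ k, Sig r k * Sig r k :=
      Finset.sum_nonneg fun k _ => mul_self_nonneg _
    simp only [hd]
    linarith
  have hdet : IsUnit (Sig * Sigᵀ + α • (1 : Matrix (Fin (ℓ + 1)) (Fin (ℓ + 1)) ℝ)).det := by
    rw [hAdiag, det_diagonal]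
    exact (Finset.prod_pos (fun r _ => hdpos r)).ne'.isUnit
  have hAinv : (Sig * Sigᵀ + α • (1 : Matrix (Fin (ℓ + 1)) (Fin (ℓ + 1)) ℝ)) *
      (Sig * Sigᵀ + α • (1 : Matrix (Fin (ℓ + 1)) (Fin (ℓ + 1)) ℝ))⁻¹ = 1 :=
    Matrix.mul_nonsing_inv _ hdet
  set B : Matrix (Fin (ℓ + 1)) (Fin (ℓ + 1)) ℝ :=
    (Sig * Sigᵀ + α • (1 : Matrix (Fin (ℓ + 1)) (Fin (ℓ + 1)) ℝ))⁻¹ with hBdef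
  have hMinv : (Tl * Tlᵀ + α • (1 : Matrix (Fin n) (Fin n) ℝ))⁻¹
      = W * B * Wᵀ + α⁻¹ • (1 - W * Wᵀ) := by
    rw [hTT]
    exact Matrix.inv_eq_right_inv (aux_inv W hW (Sig * Sigᵀ) B hα.ne' hAinv)
  -- Iq as a diagonal matrix
  set g : Fin (ℓ + 1) → ℝ := fun r => if (r : ℕ) < q then 1 else 0 with hg
  have hIqd : Iq = diagonal g := by
    ext r c
    rw [hIq r c]
    by_cases h : r = c
    · subst h
      by_cases h2 : (r : ℕ) < q <;> simp [diagonal_apply_eq, hg, h2]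
    · rw [diagonal_apply_ne _ h, if_neg (fun hh => h hh.1)]
  have hIqIq : Iq * Iq = Iq := by
    rw [hIqd, diagonal_mul_diagonal]
    ext r c
    by_cases h : r = c
    · subst h
      by_cases h2 : (r : ℕ) < q <;> simp [diagonal_apply_eq, hg, h2]
    · rw [diagonal_apply_ne _ h, diagonal_apply_ne _ h]
  have hIqT : Iqᵀ = Iq := by rw [hIqd, diagonal_transpose]
  have hIqSig : Iq * Sig = Sig := by
    rw [hIqd]
    ext r c
    rw [diagonal_mul]
    by_cases h2 : (r : ℕ) < q
    · simp [hg, h2]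
    · have h3 : Sig r c = 0 := by
        rw [hSig]
        by_cases h4 : (r : ℕ) = (c : ℕ)
        · rw [if_pos h4, hzero c (by omega)]
        · rw [if_neg h4]
      simp [hg, h2, h3]
  -- pseudoinverse of Sig
  set Sp : Matrix (Fin ℓ) (Fin (ℓ + 1)) ℝ :=
    Matrix.of fun k c => if (k : ℕ) = (c : ℕ) ∧ (k : ℕ) < q then (σ k)⁻¹ else 0 with hSpdef
  have hSp : ∀ k c, Sp k c = if (k : ℕ) = (c : ℕ) ∧ (k : ℕ) < q then (σ k)⁻¹ else 0 :=
    fun k c => rfl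
  have hSigSp : Sig * Sp = Iq := by
    ext r c
    rw [mul_apply, hIq]
    by_cases h : r = c ∧ (r : ℕ) < q
    · obtain ⟨rfl, hr⟩ := h
      have hrl : (r : ℕ) < ℓ := lt_of_lt_of_le hr hq
      rw [if_pos ⟨rfl, hr⟩, Finset.sum_eq_single (⟨(r : ℕ), hrl⟩ : Fin ℓ)]
      · have h5 : (0 : ℝ) < σ ⟨(r : ℕ), hrl⟩ := hpos _ (by simpa using hr)
        rw [hSig, hSp]
        simp [hr, h5.ne']
      · intro k _ hk
        rw [hSig]
        have : (r : ℕ) ≠ (k : ℕ) := fun hh => hk (Fin.ext hh.symm)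
        rw [if_neg this, zero_mul]
      · intro hmem; exact absurd (Finset.mem_univ _) hmem
    · rw [if_neg h]
      apply Finset.sum_eq_zero
      intro k _
      rw [hSig, hSp]
      by_cases h1 : (r : ℕ) = (k : ℕ)
      · have h2 : ¬((k : ℕ) = (c : ℕ) ∧ (k : ℕ) < q) := by
          rintro ⟨h2, h3⟩
          exact h ⟨Fin.ext (h1.trans h2), h1 ▸ h3⟩
        rw [if_neg h2, mul_zero]
      · rw [if_neg h1, zero_mul]
  -- the projector onto the range of Tl
  set P : Matrix (Fin n) (Fin n) ℝ := W * Iq * Wᵀ with hPdef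
  have hPsym : Pᵀ = P := by
    rw [hPdef]; exact aux_symm W Iq hIqT
  have hPTl : P * Tl = Tl := by
    rw [hPdef, hTl2]
    simp only [Matrix.mul_assoc]
    rw [keyW, ← Matrix.mul_assoc Iq Sig, hIqSig]
  have hTlSp : Tl * (Vl * (S * Sp)) = W * Iq := by
    rw [hTl2]
    simp only [Matrix.mul_assoc]
    rw [keyVl, keyS, hSigSp]
  have matext : ∀ A B2 : Matrix (Fin n) (Fin n) ℝ, (∀ x, A.mulVec x = B2.mulVec x) → A = B2 := by
    intro A B2 h
    apply Matrix.toLin'.injective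
    exact LinearMap.ext fun x => by simpa [Matrix.toLin'_apply] using h x
  have hPRl_fix : ∀ x, P.mulVec (Rl.mulVec x) = Rl.mulVec x := by
    intro x
    obtain ⟨u, hu⟩ := (hRrange (Rl.mulVec x)).mp ⟨x, rfl⟩
    rw [← hu, mulVec_mulVec, hPTl]
  have hRlP_fix : ∀ x, Rl.mulVec (P.mulVec x) = P.mulVec x := by
    intro x
    have hex : ∃ u, Tl.mulVec u = P.mulVec x := by
      refine ⟨(Vl * (S * Sp)).mulVec (Wᵀ.mulVec x), ?_⟩
      rw [mulVec_mulVec, mulVec_mulVec, hTlSp, ← hPdef]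
    obtain ⟨w, hw⟩ := (hRrange (P.mulVec x)).mpr hex
    rw [← hw, mulVec_mulVec, hRidem]
  have hPR : P * Rl = Rl := matext _ _ fun x => by rw [← mulVec_mulVec]; exact hPRl_fix x
  have hRP : Rl * P = P := matext _ _ fun x => by rw [← mulVec_mulVec]; exact hRlP_fix x
  have hRlEq : Rl = P := by
    have h1 := congrArg Matrix.transpose hPR
    rw [transpose_mul, hRsym, hPsym] at h1
    exact h1.symm.trans hRP
  -- reduced vector identity
  have hWT : Wᵀ = Uᵀ * Vᵀ := by rw [hWdef, transpose_mul]
  have hz : Rl.mulVec yδ = W.mulVec yhat := by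
    rw [hRlEq, hyhat, hPdef, hWT, mulVec_mulVec, mulVec_mulVec, mulVec_mulVec]
    simp only [Matrix.mul_assoc]
  have hdot : ∀ a b : Fin (ℓ + 1) → ℝ, (W.mulVec a) ⬝ᵥ (W.mulVec b) = a ⬝ᵥ b := by
    intro a b
    rw [dotProduct_mulVec, ← Matrix.mulVec_transpose, mulVec_mulVec, hW, one_mulVec]
  -- final computation
  rw [hMinv, aux_pow W hW B α⁻¹ (2 * i + 1), hz]
  congr 1
  have hWBW : W * B ^ (2 * i + 1) * Wᵀ * W = W * B ^ (2 * i + 1) := by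
    rw [Matrix.mul_assoc (W * B ^ (2 * i + 1)), hW, Matrix.mul_one]
  rw [add_mulVec, smul_mulVec, mulVec_mulVec, mulVec_mulVec, aux_QW W hW, zero_mulVec,
    smul_zero, add_zero, hWBW, ← mulVec_mulVec yhat W (B ^ (2 * i + 1)), hdot]
end
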